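/- arXiv:2405.19474 — 2 statements merged into one kernel-verified Lean document; each statement's English description precedes it below -/
import Mathlib

section
/- In a Cartesian k-differential category, if p : A → B and q : B → C are D-polynomials, then q ∘ p is a D-polynomial with deg(q ∘ p) ≤ deg(p)·deg(q). -/
/-! A self-contained formalization of (Cartesian) `k`-differential categories. -/

universe u v w

/-- A Cartesian left `k`-linear category equipped with a differential combinator
satisfying the axioms **[CD.1]**–**[CD.7]**: a Cartesian `k`-differential category.
Composition `comp f g` is in diagrammatic order (`g ∘ f`). -/
structure CDC (k : Type w) [CommSemiring k] where
  Obj : Type u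
  Hom : Obj → Obj → Type v
  idm : ∀ A : Obj, Hom A A
  comp : ∀ {A B C : Obj}, Hom A B → Hom B C → Hom A C
  id_comp : ∀ {A B : Obj} (f : Hom A B), comp (idm A) f = f
  comp_id : ∀ {A B : Obj} (f : Hom A B), comp f (idm B) = f
  assoc : ∀ {A B C D : Obj} (f : Hom A B) (g : Hom B C) (h : Hom C D),
    comp (comp f g) h = comp f (comp g h)
  -- each homset is a `k`-module
  add : ∀ {A B : Obj}, Hom A B → Hom A B → Hom A B
  zero : ∀ {A B : Obj}, Hom A B
  smul : ∀ {A B : Obj}, k → Hom A B → Hom A B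
  add_assoc : ∀ {A B : Obj} (f g h : Hom A B), add (add f g) h = add f (add g h)
  add_comm : ∀ {A B : Obj} (f g : Hom A B), add f g = add g f
  zero_add : ∀ {A B : Obj} (f : Hom A B), add zero f = f
  one_smul : ∀ {A B : Obj} (f : Hom A B), smul 1 f = f
  mul_smul : ∀ {A B : Obj} (r s : k) (f : Hom A B), smul (r * s) f = smul r (smul s f)
  smul_add : ∀ {A B : Obj} (r : k) (f g : Hom A B), smul r (add f g) = add (smul r f) (smul r g)
  add_smul : ∀ {A B : Obj} (r s : k) (f : Hom A B), smul (r + s) f = add (smul r f) (smul s f)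
  zero_smul : ∀ {A B : Obj} (f : Hom A B), smul 0 f = zero
  smul_zero : ∀ {A B : Obj} (r : k), smul r (zero (A := A) (B := B)) = zero
  -- pre-composition is `k`-linear
  comp_add : ∀ {A B C : Obj} (x : Hom A B) (f g : Hom B C),
    comp x (add f g) = add (comp x f) (comp x g)
  comp_smul : ∀ {A B C : Obj} (x : Hom A B) (r : k) (f : Hom B C),
    comp x (smul r f) = smul r (comp x f)
  comp_zero : ∀ {A B C : Obj} (x : Hom A B), comp x (zero (A := B) (B := C)) = zero
  -- finite products
  prod : Obj → Obj → Obj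
  fst : ∀ {A B : Obj}, Hom (prod A B) A
  snd : ∀ {A B : Obj}, Hom (prod A B) B
  lift : ∀ {C A B : Obj}, Hom C A → Hom C B → Hom C (prod A B)
  lift_fst : ∀ {C A B : Obj} (f : Hom C A) (g : Hom C B), comp (lift f g) fst = f
  lift_snd : ∀ {C A B : Obj} (f : Hom C A) (g : Hom C B), comp (lift f g) snd = g
  lift_unique : ∀ {C A B : Obj} (h : Hom C (prod A B)), lift (comp h fst) (comp h snd) = h
  -- projections are `k`-linear
  fst_add : ∀ {C A B : Obj} (f g : Hom C (prod A B)),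
    comp (add f g) fst = add (comp f fst) (comp g fst)
  fst_smul : ∀ {C A B : Obj} (r : k) (f : Hom C (prod A B)),
    comp (smul r f) fst = smul r (comp f fst)
  snd_add : ∀ {C A B : Obj} (f g : Hom C (prod A B)),
    comp (add f g) snd = add (comp f snd) (comp g snd)
  snd_smul : ∀ {C A B : Obj} (r : k) (f : Hom C (prod A B)),
    comp (smul r f) snd = smul r (comp f snd)
  -- the differential combinator
  D : ∀ {A B : Obj}, Hom A B → Hom (prod A A) B
  CD1 : ∀ {A B : Obj} (r s : k) (f g : Hom A B),
    D (add (smul r f) (smul s g)) = add (smul r (D f)) (smul s (D g))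
  CD2 : ∀ {A B C : Obj} (f : Hom A B) (r s : k) (a b c : Hom C A),
    comp (lift a (add (smul r b) (smul s c))) (D f)
      = add (smul r (comp (lift a b) (D f))) (smul s (comp (lift a c) (D f)))
  CD3id : ∀ {A : Obj}, D (idm A) = snd
  CD3fst : ∀ {A B : Obj}, D (fst (A := A) (B := B)) = comp snd fst
  CD3snd : ∀ {A B : Obj}, D (snd (A := A) (B := B)) = comp snd snd
  CD4 : ∀ {A B C : Obj} (f : Hom A B) (g : Hom A C), D (lift f g) = lift (D f) (D g)
  CD5 : ∀ {A B C : Obj} (f : Hom A B) (g : Hom B C),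
    D (comp f g) = comp (lift (comp fst f) (D f)) (D g)
  CD6 : ∀ {A B C : Obj} (f : Hom A B) (a b : Hom C A),
    comp (lift (lift a zero) (lift zero b)) (D (D f)) = comp (lift a b) (D f)
  CD7 : ∀ {A B C : Obj} (f : Hom A B) (a b c d : Hom C A),
    comp (lift (lift a b) (lift c d)) (D (D f))
      = comp (lift (lift a c) (lift b d)) (D (D f))

namespace CDC

variable {k : Type w} [CommSemiring k]

/-- `pow A n` is the product `A × A^{×ⁿ}` (so `pow A 0 = A`), the domain of the
`n`-th derivative `∂⁽ⁿ⁾[f] : A × A^{×ⁿ} → B`. -/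
def pow (X : CDC k) (A : X.Obj) : ℕ → X.Obj
  | 0 => A
  | n + 1 => X.prod (X.pow A n) A

/-- `pad A n : A → A × A^{×ⁿ}` is `a ↦ (a, 0, …, 0)`. -/
def pad (X : CDC k) (A : X.Obj) : (n : ℕ) → X.Hom A (X.pow A n)
  | 0 => X.idm A
  | n + 1 => X.lift (X.pad A n) X.zero

/-- The `n`-th derivative `∂⁽ⁿ⁾[f] : A × A^{×ⁿ} → B`, defined inductively by
`∂⁽⁰⁾[f] = f` and `∂⁽ⁿ⁺¹⁾[f]` is the partial derivative of `∂⁽ⁿ⁾[f]` in its first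
argument (obtained by padding the direction vector with zeroes). -/
def pd (X : CDC k) {A B : X.Obj} : (n : ℕ) → X.Hom A B → X.Hom (X.pow A n) B
  | 0, f => f
  | n + 1, f =>
      X.comp (X.lift X.fst (X.comp X.snd (X.pad A n))) (X.D (X.pd n f))

/-- `diag A n : A → A × A^{×ⁿ}` is `x ↦ (0, x, …, x)`. -/
def diag (X : CDC k) (A : X.Obj) : (n : ℕ) → X.Hom A (X.pow A n)
  | 0 => X.zero
  | n + 1 => X.lift (X.diag A n) (X.idm A)

/-- A map `p` is a `D`-polynomial if `∂⁽ⁿ⁺¹⁾[p] = 0` for some `n`. -/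
def IsPoly (X : CDC k) {A B : X.Obj} (p : X.Hom A B) : Prop :=
  ∃ n : ℕ, X.pd (n + 1) p = X.zero

/-- The `D`-degree of `p`: the least `n` with `∂⁽ⁿ⁺¹⁾[p] = 0`. -/
noncomputable def deg (X : CDC k) {A B : X.Obj} (p : X.Hom A B) : ℕ :=
  sInf {n : ℕ | X.pd (n + 1) p = X.zero}

end CDC

/-- A Cartesian `k`-differential category over a commutative `ℚ≥0`-algebra `k`,
i.e. where every `n! ∈ k` is invertible. -/
structure QCDC (k : Type w) [CommSemiring k] extends CDC k where
  invFact : ℕ → k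
  invFact_spec : ∀ n : ℕ, (Nat.factorial n : k) * invFact n = 1

namespace QCDC

variable {k : Type w} [CommSemiring k]

/-- The `n`-th Taylor differential monomial `M⁽ⁿ⁾[f](x) = (1/n!) · ∂⁽ⁿ⁾[f](0, x, …, x)`. -/
def M (X : QCDC k) {A B : X.Obj} (n : ℕ) (f : X.Hom A B) : X.Hom A B :=
  X.smul (X.invFact n) (X.comp (X.toCDC.diag A n) (X.toCDC.pd n f))

/-- The `n`-th Taylor differential polynomial `T⁽ⁿ⁾[f] = Σ_{j=0}^n M⁽ʲ⁾[f]`. -/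
def T (X : QCDC k) {A B : X.Obj} : ℕ → X.Hom A B → X.Hom A B
  | 0, f => X.M 0 f
  | n + 1, f => X.add (X.T n f) (X.M (n + 1) f)

/-- The `D`-distance: `2^(-n)` for the least `n` where the Taylor monomials of `f` and `g`
disagree, and `0` if they all agree. -/
noncomputable def dD (X : QCDC k) {A B : X.Obj} (f g : X.Hom A B) : ℝ :=
  open Classical in
  if ∀ n : ℕ, X.M n f = X.M n g then 0
  else (2 : ℝ) ^ (-((sInf {n : ℕ | ¬ X.M n f = X.M n g} : ℕ) : ℤ))

/-- A Cartesian `k`-differential category is **Taylor** if maps are completely determined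
by their Taylor differential monomials. -/
def Taylor (X : QCDC k) : Prop :=
  ∀ (A B : X.Obj) (f g : X.Hom A B), (∀ n : ℕ, X.M n f = X.M n g) → f = g

end QCDC
namespace CDC

variable {k : Type w} [CommSemiring k]

instance instZero (X : CDC k) (A B : X.Obj) : Zero (X.Hom A B) := ⟨X.zero⟩
instance instAdd (X : CDC k) (A B : X.Obj) : Add (X.Hom A B) := ⟨X.add⟩

instance instACM (X : CDC k) (A B : X.Obj) : AddCommMonoid (X.Hom A B) where
  add_assoc := X.add_assoc
  add_comm := X.add_comm
  zero_add := X.zero_add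
  add_zero f := (X.add_comm f X.zero).trans (X.zero_add f)
  nsmul := nsmulRec

variable (X : CDC k)

theorem add_def {A B : X.Obj} (f g : X.Hom A B) : X.add f g = f + g := rfl

theorem zero_def {A B : X.Obj} : X.zero (A := A) (B := B) = 0 := rfl

theorem add_zero' {A B : X.Obj} (f : X.Hom A B) : X.add f X.zero = f :=
  (X.add_comm f X.zero).trans (X.zero_add f)

theorem comp_lift {Z A B C : X.Obj} (x : X.Hom Z A) (f : X.Hom A B) (g : X.Hom A C) :
    X.comp x (X.lift f g) = X.lift (X.comp x f) (X.comp x g) := by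
  have h := X.lift_unique (X.comp x (X.lift f g))
  rw [X.assoc, X.lift_fst, X.assoc, X.lift_snd] at h
  exact h.symm

theorem lift_fst_snd {A B : X.Obj} :
    X.lift (X.fst (A := A) (B := B)) X.snd = X.idm (X.prod A B) := by
  have h := X.lift_unique (X.idm (X.prod A B))
  rwa [X.id_comp, X.id_comp] at h

theorem zero_comp_fst {Z A B : X.Obj} :
    X.comp (X.zero (A := Z) (B := X.prod A B)) X.fst = X.zero := by
  have h := X.fst_smul (0 : k) (X.zero (A := Z) (B := X.prod A B))
  rwa [X.zero_smul, X.zero_smul] at h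

theorem zero_comp_snd {Z A B : X.Obj} :
    X.comp (X.zero (A := Z) (B := X.prod A B)) X.snd = X.zero := by
  have h := X.snd_smul (0 : k) (X.zero (A := Z) (B := X.prod A B))
  rwa [X.zero_smul, X.zero_smul] at h

theorem lift_zero_zero {Z A B : X.Obj} :
    X.lift (X.zero (A := Z) (B := A)) (X.zero (A := Z) (B := B)) = X.zero := by
  have h := X.lift_unique (X.zero (A := Z) (B := X.prod A B))
  rwa [X.zero_comp_fst, X.zero_comp_snd] at h

theorem lift_add_lift {Z A B : X.Obj} (a c : X.Hom Z A) (b d : X.Hom Z B) :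
    X.add (X.lift a b) (X.lift c d) = X.lift (X.add a c) (X.add b d) := by
  have h := X.lift_unique (X.add (X.lift a b) (X.lift c d))
  rw [X.fst_add, X.snd_add, X.lift_fst, X.lift_fst, X.lift_snd, X.lift_snd] at h
  exact h.symm

theorem lift_split {Z A B : X.Obj} (a : X.Hom Z A) (b : X.Hom Z B) :
    X.lift a b = X.add (X.lift a X.zero) (X.lift X.zero b) := by
  rw [X.lift_add_lift, X.add_zero', X.zero_add]

theorem D_zero {A B : X.Obj} : X.D (X.zero (A := A) (B := B)) = X.zero := by
  have h := X.CD1 (0 : k) (0 : k) (X.zero (A := A) (B := B)) X.zero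
  rw [X.zero_smul, X.zero_add, X.zero_smul, X.zero_add] at h
  exact h

theorem D_add {A B : X.Obj} (f g : X.Hom A B) : X.D (X.add f g) = X.add (X.D f) (X.D g) := by
  have h := X.CD1 (1 : k) (1 : k) f g
  rw [X.one_smul, X.one_smul, X.one_smul, X.one_smul] at h
  exact h

theorem CD2add {A B Z : X.Obj} (f : X.Hom A B) (a : X.Hom Z A) (b c : X.Hom Z A) :
    X.comp (X.lift a (X.add b c)) (X.D f)
      = X.add (X.comp (X.lift a b) (X.D f)) (X.comp (X.lift a c) (X.D f)) := by
  have h := X.CD2 f (1 : k) (1 : k) a b c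
  rw [X.one_smul, X.one_smul, X.one_smul, X.one_smul] at h
  exact h

theorem CD2zero {A B Z : X.Obj} (f : X.Hom A B) (a : X.Hom Z A) :
    X.comp (X.lift a X.zero) (X.D f) = X.zero := by
  have h := X.CD2 f (0 : k) (0 : k) a X.zero X.zero
  rw [X.zero_smul, X.zero_add, X.zero_smul, X.zero_add] at h
  exact h

/-- A map is *linear* when its derivative is projection followed by itself. -/
def Lin {A B : X.Obj} (f : X.Hom A B) : Prop := X.D f = X.comp X.snd f

theorem lin_id {A : X.Obj} : X.Lin (X.idm A) := by
  unfold Lin; rw [X.CD3id, X.comp_id]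

theorem lin_fst {A B : X.Obj} : X.Lin (X.fst (A := A) (B := B)) := X.CD3fst

theorem lin_snd {A B : X.Obj} : X.Lin (X.snd (A := A) (B := B)) := X.CD3snd

theorem lin_zero {A B : X.Obj} : X.Lin (X.zero (A := A) (B := B)) := by
  unfold Lin; rw [X.D_zero, X.comp_zero]

theorem lin_lift {A B C : X.Obj} {f : X.Hom A B} {g : X.Hom A C}
    (hf : X.Lin f) (hg : X.Lin g) : X.Lin (X.lift f g) := by
  unfold Lin at *
  rw [X.CD4, hf, hg, X.comp_lift]

theorem lin_comp {A B C : X.Obj} {f : X.Hom A B} {g : X.Hom B C}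
    (hf : X.Lin f) (hg : X.Lin g) : X.Lin (X.comp f g) := by
  unfold Lin at *
  rw [X.CD5, hf, hg, ← X.assoc, X.lift_snd, X.assoc]

theorem D_pre_lin {A B C : X.Obj} {f : X.Hom A B} (g : X.Hom B C) (hf : X.Lin f) :
    X.D (X.comp f g) = X.comp (X.lift (X.comp X.fst f) (X.comp X.snd f)) (X.D g) := by
  rw [X.CD5, hf]

theorem D_post_lin {A B C : X.Obj} (f : X.Hom A B) {g : X.Hom B C} (hg : X.Lin g) :
    X.D (X.comp f g) = X.comp (X.D f) g := by
  rw [X.CD5, hg, ← X.assoc, X.lift_snd]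

end CDC
namespace CDC

variable {k : Type w} [CommSemiring k] (X : CDC k)

/-- Base-point projection `A × A^{×ⁿ} → A`. -/
def th (A : X.Obj) : (n : ℕ) → X.Hom (X.pow A n) A
  | 0 => X.idm A
  | n + 1 => X.comp X.fst (th A n)

/-- The padding map used in the definition of `pd`. -/
def phi (A : X.Obj) (n : ℕ) : X.Hom (X.pow A (n + 1)) (X.prod (X.pow A n) (X.pow A n)) :=
  X.lift X.fst (X.comp X.snd (X.pad A n))

theorem th_zero (A : X.Obj) : X.th A 0 = X.idm A := rfl
theorem th_succ (A : X.Obj) (n : ℕ) : X.th A (n + 1) = X.comp X.fst (X.th A n) := rfl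
theorem pad_zero (A : X.Obj) : X.pad A 0 = X.idm A := rfl
theorem pad_succ (A : X.Obj) (n : ℕ) : X.pad A (n + 1) = X.lift (X.pad A n) X.zero := rfl
theorem pd_zero_eq {A B : X.Obj} (f : X.Hom A B) : X.pd 0 f = f := rfl

theorem pd_succ {A B : X.Obj} (n : ℕ) (f : X.Hom A B) :
    X.pd (n + 1) f = X.comp (X.phi A n) (X.D (X.pd n f)) := rfl

theorem pd_one {A B : X.Obj} (f : X.Hom A B) : X.pd 1 f = X.D f := by
  rw [X.pd_succ, X.pd_zero_eq]
  unfold phi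
  have h2 : X.comp (X.snd (A := X.pow A 0) (B := A)) (X.pad A 0) = X.snd := X.comp_id _
  erw [h2]
  have h3 : X.lift (X.fst (A := X.pow A 0) (B := A)) X.snd = X.idm (X.pow A 1) :=
    X.lift_fst_snd
  erw [h3]
  exact X.id_comp _

theorem lin_th (A : X.Obj) (n : ℕ) : X.Lin (X.th A n) := by
  induction n with
  | zero => exact X.lin_id
  | succ n ih => exact X.lin_comp X.lin_fst ih

theorem lin_pad (A : X.Obj) (n : ℕ) : X.Lin (X.pad A n) := by
  induction n with
  | zero => exact X.lin_id
  | succ n ih => exact X.lin_lift ih X.lin_zero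

theorem lin_phi (A : X.Obj) (n : ℕ) : X.Lin (X.phi A n) :=
  X.lin_lift X.lin_fst (X.lin_comp X.lin_snd (X.lin_pad A n))

theorem pad_th (A : X.Obj) (n : ℕ) : X.comp (X.pad A n) (X.th A n) = X.idm A := by
  induction n with
  | zero => exact X.comp_id _
  | succ n ih => erw [X.pad_succ, X.th_succ, ← X.assoc, X.lift_fst, ih]

theorem zero_comp_pad {Z : X.Obj} (A : X.Obj) (n : ℕ) :
    X.comp (X.zero (A := Z) (B := A)) (X.pad A n) = X.zero := by
  induction n with
  | zero => exact X.comp_id _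
  | succ n ih => erw [X.pad_succ, X.comp_lift, ih, X.comp_zero, X.lift_zero_zero]; rfl

theorem lift_comp_phi {Z A : X.Obj} (n : ℕ) (a : X.Hom Z (X.pow A n)) (w : X.Hom Z A) :
    X.comp (X.lift a w) (X.phi A n) = X.lift a (X.comp w (X.pad A n)) := by
  unfold phi
  erw [X.comp_lift, X.lift_fst, ← X.assoc, X.lift_snd]

theorem comp_phi {Z A : X.Obj} (n : ℕ) (y : X.Hom Z (X.pow A (n + 1))) :
    X.comp y (X.phi A n)
      = X.lift (X.comp y X.fst) (X.comp (X.comp y X.snd) (X.pad A n)) := by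
  unfold phi
  erw [X.comp_lift, ← X.assoc]

theorem phi_fst {A : X.Obj} (n : ℕ) : X.comp (X.phi A n) X.fst = X.fst := X.lift_fst _ _

theorem phi_snd {A : X.Obj} (n : ℕ) :
    X.comp (X.phi A n) X.snd = X.comp X.snd (X.pad A n) := X.lift_snd _ _

/-- Insertion of a single direction vector in slot `j` (0-indexed), zero elsewhere. -/
def emb (B : X.Obj) : (n j : ℕ) → X.Hom B (X.pow B n)
  | 0, _ => X.idm B
  | n + 1, j => if j = n then X.lift X.zero (X.idm B) else X.lift (emb B n j) X.zero

/-- Projection onto direction slot `j` (0-indexed). -/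
def dproj (B : X.Obj) : (n j : ℕ) → X.Hom (X.pow B n) B
  | 0, _ => X.zero
  | n + 1, j => if j = n then X.snd else X.comp X.fst (dproj B n j)

/-- Replace direction slot `j` of the tuple `x` by `v`. -/
def sset {Z B : X.Obj} : (n j : ℕ) → X.Hom Z (X.pow B n) → X.Hom Z B → X.Hom Z (X.pow B n)
  | 0, _, x, _ => x
  | n + 1, j, x, v =>
      if j = n then X.lift (X.comp x X.fst) v
      else X.lift (sset n j (X.comp x X.fst) v) (X.comp x X.snd)

theorem emb_succ (B : X.Obj) (n j : ℕ) :
    X.emb B (n + 1) j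
      = if j = n then X.lift X.zero (X.idm B) else X.lift (X.emb B n j) X.zero := rfl

theorem emb_top (B : X.Obj) (n : ℕ) : X.emb B (n + 1) n = X.lift X.zero (X.idm B) := by
  rw [X.emb_succ, if_pos rfl]

theorem emb_lt {B : X.Obj} {n j : ℕ} (h : j ≠ n) :
    X.emb B (n + 1) j = X.lift (X.emb B n j) X.zero := by
  rw [X.emb_succ, if_neg h]

theorem dproj_succ (B : X.Obj) (n j : ℕ) :
    X.dproj B (n + 1) j = if j = n then X.snd else X.comp X.fst (X.dproj B n j) := rfl

theorem dproj_top (B : X.Obj) (n : ℕ) : X.dproj B (n + 1) n = X.snd := by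
  rw [X.dproj_succ, if_pos rfl]

theorem dproj_lt {B : X.Obj} {n j : ℕ} (h : j ≠ n) :
    X.dproj B (n + 1) j = X.comp X.fst (X.dproj B n j) := by
  rw [X.dproj_succ, if_neg h]

theorem sset_succ {Z B : X.Obj} (n j : ℕ) (x : X.Hom Z (X.pow B (n + 1))) (v : X.Hom Z B) :
    X.sset (n + 1) j x v
      = if j = n then X.lift (X.comp x X.fst) v
        else X.lift (X.sset n j (X.comp x X.fst) v) (X.comp x X.snd) := rfl

theorem sset_top {Z B : X.Obj} (n : ℕ) (x : X.Hom Z (X.pow B (n + 1))) (v : X.Hom Z B) :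
    X.sset (n + 1) n x v = X.lift (X.comp x X.fst) v := by
  rw [X.sset_succ, if_pos rfl]

theorem sset_lt {Z B : X.Obj} {n j : ℕ} (h : j ≠ n) (x : X.Hom Z (X.pow B (n + 1)))
    (v : X.Hom Z B) :
    X.sset (n + 1) j x v = X.lift (X.sset n j (X.comp x X.fst) v) (X.comp x X.snd) := by
  rw [X.sset_succ, if_neg h]

theorem zero_comp_emb {Z B : X.Obj} (n j : ℕ) :
    X.comp (X.zero (A := Z) (B := B)) (X.emb B n j) = X.zero := by
  induction n with
  | zero => exact X.comp_id _
  | succ n ih =>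
      by_cases h : j = n
      · subst h
        erw [X.emb_top, X.comp_lift, X.comp_zero, X.comp_id, X.lift_zero_zero]; rfl
      · erw [X.emb_lt h, X.comp_lift, ih, X.comp_zero, X.lift_zero_zero]; rfl

theorem lin_emb (B : X.Obj) (n j : ℕ) : X.Lin (X.emb B n j) := by
  induction n with
  | zero => exact X.lin_id
  | succ n ih =>
      by_cases h : j = n
      · subst h; rw [X.emb_top]; exact X.lin_lift X.lin_zero X.lin_id
      · rw [X.emb_lt h]; exact X.lin_lift ih X.lin_zero

theorem lin_sset {Z B : X.Obj} (n j : ℕ) {x : X.Hom Z (X.pow B n)} {v : X.Hom Z B}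
    (hx : X.Lin x) (hv : X.Lin v) : X.Lin (X.sset n j x v) := by
  induction n generalizing Z with
  | zero => exact hx
  | succ n ih =>
      by_cases h : j = n
      · subst h; rw [X.sset_top]; exact X.lin_lift (X.lin_comp hx X.lin_fst) hv
      · rw [X.sset_lt h]
        exact X.lin_lift (ih (X.lin_comp hx X.lin_fst) hv) (X.lin_comp hx X.lin_snd)

theorem sset_nat {Z' Z B : X.Obj} (n j : ℕ) (h : X.Hom Z' Z) (x : X.Hom Z (X.pow B n))
    (v : X.Hom Z B) :
    X.sset n j (X.comp h x) (X.comp h v) = X.comp h (X.sset n j x v) := by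
  induction n generalizing Z' Z with
  | zero => rfl
  | succ n ih =>
      by_cases hj : j = n
      · subst hj
        erw [X.sset_top, X.sset_top, X.comp_lift, X.assoc]
      · erw [X.sset_lt hj, X.sset_lt hj, X.comp_lift, X.assoc, X.assoc, ih]

theorem pad_sset_zero {Z B : X.Obj} (n j : ℕ) (u : X.Hom Z B) :
    X.sset n j (X.comp u (X.pad B n)) X.zero = X.comp u (X.pad B n) := by
  induction n generalizing Z with
  | zero => rfl
  | succ n ih =>
      erw [X.pad_succ, X.comp_lift, X.comp_zero]
      by_cases hj : j = n
      · subst hj; erw [X.sset_top, X.lift_fst]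
      · erw [X.sset_lt hj, X.lift_fst, X.lift_snd, ih]

end CDC
namespace CDC

variable {k : Type w} [CommSemiring k] (X : CDC k)

theorem lift_comp_pair {Z W U : X.Obj} (a b : X.Hom Z W) (u : X.Hom W U) :
    X.comp (X.lift a b) (X.lift (X.comp X.fst u) (X.comp X.snd u))
      = X.lift (X.comp a u) (X.comp b u) := by
  rw [X.comp_lift, ← X.assoc, X.lift_fst, ← X.assoc, X.lift_snd]

theorem P1_top {B C Z : X.Obj} (n : ℕ) (g : X.Hom (X.pow B n) C)
    (x : X.Hom Z (X.pow B (n + 1))) (v : X.Hom Z B) :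
    X.comp (X.lift x (X.lift X.zero v)) (X.D (X.comp (X.phi B n) (X.D g)))
      = X.comp (X.lift (X.comp x X.fst) v) (X.comp (X.phi B n) (X.D g)) := by
  rw [X.D_pre_lin (X.D g) (X.lin_phi B n)]
  erw [← X.assoc, X.lift_comp_pair]
  erw [X.comp_phi, X.comp_phi]
  erw [X.lift_fst, X.lift_snd]
  rw [X.CD7]
  rw [X.lift_split (X.comp (X.comp x X.snd) (X.pad B n)) (X.comp v (X.pad B n))]
  rw [X.CD2add]
  rw [X.CD7 g (X.comp x X.fst) X.zero (X.comp (X.comp x X.snd) (X.pad B n)) X.zero]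
  rw [X.lift_zero_zero, X.CD2zero, X.zero_add]
  rw [X.CD6]
  erw [← X.lift_comp_phi, X.assoc]

theorem P2_top {B C Z : X.Obj} (n : ℕ) (g : X.Hom (X.pow B n) C)
    (x : X.Hom Z (X.pow B (n + 1))) :
    X.comp (X.lift (X.comp x X.fst) X.zero) (X.comp (X.phi B n) (X.D g)) = X.zero := by
  erw [← X.assoc, X.lift_comp_phi, X.zero_comp_pad, X.CD2zero]

/-- [HD.2], substitution form: the derivative of `∂⁽ⁿ⁾q` in a direction concentrated in
slot `j` is given by substitution into slot `j`. -/
theorem pd_sub {B C : X.Obj} (q : X.Hom B C) :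
    ∀ (n j : ℕ), j < n → ∀ {Z : X.Obj} (x : X.Hom Z (X.pow B n)) (v : X.Hom Z B),
      X.comp (X.lift x (X.comp v (X.emb B n j))) (X.D (X.pd n q))
        = X.comp (X.sset n j x v) (X.pd n q) := by
  intro n
  induction n with
  | zero => intro j hj; exact absurd hj (Nat.not_lt_zero j)
  | succ n ih =>
      intro j hj Z x v
      by_cases hjn : j = n
      · subst hjn
        have he : X.comp v (X.emb B (j + 1) j) = X.lift X.zero v := by
          erw [X.emb_top, X.comp_lift, X.comp_zero, X.comp_id]
        rw [he, X.pd_succ, X.sset_top]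
        exact X.P1_top j (X.pd j q) x v
      · have hj' : j < n := lt_of_le_of_ne (Nat.lt_succ_iff.mp hj) hjn
        have hmor := ih j hj' (X.fst (A := X.pow B n) (B := B)) X.snd
        have hD := congrArg X.D hmor
        have hlι : X.Lin (X.lift (X.fst (A := X.pow B n) (B := B))
            (X.comp X.snd (X.emb B n j))) :=
          X.lin_lift X.lin_fst (X.lin_comp X.lin_snd (X.lin_emb B n j))
        have hls : X.Lin (X.sset n j (X.fst (A := X.pow B n) (B := B)) X.snd) :=
          X.lin_sset n j X.lin_fst X.lin_snd
        rw [X.D_pre_lin _ hlι, X.D_pre_lin _ hls] at hD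
        have hP := congrArg (fun t => X.comp (X.lift (X.lift (X.comp x X.fst) v)
          (X.lift (X.comp (X.comp x X.snd) (X.pad B n)) X.zero)) t) hD
        rw [← X.assoc, ← X.assoc, X.lift_comp_pair, X.lift_comp_pair] at hP
        have e1 : X.comp (X.lift (X.comp x X.fst) v)
            (X.lift X.fst (X.comp X.snd (X.emb B n j)))
            = X.lift (X.comp x X.fst) (X.comp v (X.emb B n j)) := by
          rw [X.comp_lift, X.lift_fst, ← X.assoc, X.lift_snd]
        have e2 : X.comp (X.lift (X.comp (X.comp x X.snd) (X.pad B n)) X.zero)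
            (X.lift X.fst (X.comp X.snd (X.emb B n j)))
            = X.lift (X.comp (X.comp x X.snd) (X.pad B n)) X.zero := by
          rw [X.comp_lift, X.lift_fst, ← X.assoc, X.lift_snd, X.zero_comp_emb]
        have e3 : X.comp (X.lift (X.comp x X.fst) v) (X.sset n j X.fst X.snd)
            = X.sset n j (X.comp x X.fst) v := by
          rw [← X.sset_nat, X.lift_fst, X.lift_snd]
        have e4 : X.comp (X.lift (X.comp (X.comp x X.snd) (X.pad B n)) X.zero)
            (X.sset n j X.fst X.snd) = X.comp (X.comp x X.snd) (X.pad B n) := by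
          rw [← X.sset_nat, X.lift_fst, X.lift_snd, X.pad_sset_zero]
        rw [e1, e2, e3, e4] at hP
        rw [X.emb_lt hjn]
        have he : X.comp v (X.lift (X.emb B n j) (X.zero (A := B) (B := B)))
            = X.lift (X.comp v (X.emb B n j)) (X.zero (A := Z) (B := B)) := by
          rw [X.comp_lift, X.comp_zero]
        erw [he, X.pd_succ, X.D_pre_lin _ (X.lin_phi B n), ← X.assoc, X.lift_comp_pair,
          X.comp_phi, X.comp_phi, X.lift_fst, X.lift_snd, X.zero_comp_pad]
        rw [X.CD7]
        rw [hP]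
        erw [X.sset_lt hjn, ← X.assoc, X.lift_comp_phi]

/-- [HD.2], vanishing form: `∂⁽ⁿ⁾q` vanishes on tuples with a zero direction slot. -/
theorem pd_slot_zero {B C : X.Obj} (q : X.Hom B C) :
    ∀ (n j : ℕ), j < n → ∀ {Z : X.Obj} (x : X.Hom Z (X.pow B n)),
      X.comp (X.sset n j x X.zero) (X.pd n q) = X.zero := by
  intro n
  induction n with
  | zero => intro j hj; exact absurd hj (Nat.not_lt_zero j)
  | succ n ih =>
      intro j hj Z x
      by_cases hjn : j = n
      · subst hjn
        rw [X.sset_top, X.pd_succ]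
        exact X.P2_top j (X.pd j q) x
      · have hj' : j < n := lt_of_le_of_ne (Nat.lt_succ_iff.mp hj) hjn
        have hmor := ih j hj' (X.idm (X.pow B n))
        have hD := congrArg X.D hmor
        have hlz : X.Lin (X.sset n j (X.idm (X.pow B n)) X.zero) :=
          X.lin_sset n j X.lin_id X.lin_zero
        rw [X.D_pre_lin _ hlz, X.D_zero] at hD
        have hP := congrArg (fun t => X.comp (X.lift (X.comp x X.fst)
          (X.comp (X.comp x X.snd) (X.pad B n))) t) hD
        rw [← X.assoc, X.lift_comp_pair, X.comp_zero] at hP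
        have e5 : X.comp (X.comp x X.fst) (X.sset n j (X.idm (X.pow B n)) X.zero)
            = X.sset n j (X.comp x X.fst) X.zero := by
          rw [← X.sset_nat, X.comp_id, X.comp_zero]
        have e6 : X.comp (X.comp (X.comp x X.snd) (X.pad B n))
            (X.sset n j (X.idm (X.pow B n)) X.zero)
            = X.comp (X.comp x X.snd) (X.pad B n) := by
          rw [← X.sset_nat, X.comp_id, X.comp_zero, X.pad_sset_zero]
        rw [e5, e6] at hP
        erw [X.sset_lt hjn, X.pd_succ, ← X.assoc, X.lift_comp_phi]
        exact hP

end CDC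
namespace CDC

variable {k : Type w} [CommSemiring k] (X : CDC k)

theorem sum_lift_zero {Z A B : X.Obj} (s : Finset ℕ) (f : ℕ → X.Hom Z A) :
    (∑ j ∈ s, X.lift (f j) (X.zero (A := Z) (B := B)))
      = X.lift (∑ j ∈ s, f j) X.zero := by
  induction s using Finset.induction_on with
  | empty =>
      rw [Finset.sum_empty, Finset.sum_empty]
      exact X.lift_zero_zero.symm
  | insert _ _ hni ih =>
      rw [Finset.sum_insert hni, Finset.sum_insert hni, ih, ← X.add_def, X.lift_add_lift,
        X.zero_add, ← X.add_def]

theorem dec {Z : X.Obj} (B : X.Obj) : ∀ (n : ℕ) (V : X.Hom Z (X.pow B n)),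
    X.add (X.comp (X.comp V (X.th B n)) (X.pad B n))
      (∑ j ∈ Finset.range n, X.comp (X.comp V (X.dproj B n j)) (X.emb B n j)) = V := by
  intro n
  induction n with
  | zero =>
      intro V
      rw [Finset.range_zero, Finset.sum_empty, ← X.zero_def, X.add_zero']
      have h1 : X.comp V (X.th B 0) = V := X.comp_id V
      rw [h1]
      exact X.comp_id V
  | succ n ih =>
      intro V
      rw [Finset.sum_range_succ, X.dproj_top, X.emb_top]
      have hlast : X.comp (X.comp V X.snd) (X.lift X.zero (X.idm B))
          = X.lift (X.zero (A := Z) (B := X.pow B n)) (X.comp V X.snd) := by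
        rw [X.comp_lift, X.comp_zero, X.comp_id]
      erw [hlast]
      have hterm : ∀ j ∈ Finset.range n,
          X.comp (X.comp V (X.dproj B (n + 1) j)) (X.emb B (n + 1) j)
            = X.lift (X.comp (X.comp (X.comp V X.fst) (X.dproj B n j)) (X.emb B n j))
                (X.zero (A := Z) (B := B)) := by
        intro j hj
        have hj' : j ≠ n := Nat.ne_of_lt (Finset.mem_range.mp hj)
        erw [X.dproj_lt hj', X.emb_lt hj', ← X.assoc, X.comp_lift, X.comp_zero]
      erw [Finset.sum_congr rfl hterm, X.sum_lift_zero]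
      rw [X.th_succ, X.pad_succ]
      have hbase : X.comp (X.comp V (X.comp X.fst (X.th B n)))
            (X.lift (X.pad B n) (X.zero (A := B) (B := B)))
          = X.lift (X.comp (X.comp (X.comp V X.fst) (X.th B n)) (X.pad B n))
              (X.zero (A := Z) (B := B)) := by
        erw [← X.assoc, X.comp_lift, X.comp_zero]
      erw [hbase, ← X.add_def, ← X.add_assoc, X.lift_add_lift, X.zero_add, X.lift_add_lift,
        X.add_zero', X.zero_add, ih (X.comp V X.fst)]
      exact X.lift_unique V

theorem comp_lift_D_sum {Z A B : X.Obj} (f : X.Hom A B) (a : X.Hom Z A)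
    (s : Finset ℕ) (c : ℕ → X.Hom Z A) :
    X.comp (X.lift a (∑ j ∈ s, c j)) (X.D f) = ∑ j ∈ s, X.comp (X.lift a (c j)) (X.D f) := by
  induction s using Finset.induction_on with
  | empty => rw [Finset.sum_empty, Finset.sum_empty, ← X.zero_def, X.CD2zero, X.zero_def]
  | insert _ _ hni ih =>
      rw [Finset.sum_insert hni, Finset.sum_insert hni, ← X.add_def, X.CD2add, ih, X.add_def]

/-- Faà di Bruno expansion step: the derivative of `∂⁽ⁿ⁾q` at a general direction tuple. -/
theorem expand {B C : X.Obj} (q : X.Hom B C) (n : ℕ) {Z : X.Obj}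
    (x V : X.Hom Z (X.pow B n)) :
    X.comp (X.lift x V) (X.D (X.pd n q))
      = X.add (X.comp (X.lift x (X.comp V (X.th B n))) (X.pd (n + 1) q))
          (∑ j ∈ Finset.range n,
            X.comp (X.sset n j x (X.comp V (X.dproj B n j))) (X.pd n q)) := by
  conv_lhs => rw [← X.dec B n V]
  rw [X.CD2add, X.comp_lift_D_sum]
  have hb : X.comp (X.lift x (X.comp (X.comp V (X.th B n)) (X.pad B n))) (X.D (X.pd n q))
      = X.comp (X.lift x (X.comp V (X.th B n))) (X.pd (n + 1) q) := by
    erw [X.pd_succ, ← X.assoc, X.lift_comp_phi]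
  rw [hb]
  have hs : ∀ j ∈ Finset.range n,
      X.comp (X.lift x (X.comp (X.comp V (X.dproj B n j)) (X.emb B n j))) (X.D (X.pd n q))
        = X.comp (X.sset n j x (X.comp V (X.dproj B n j))) (X.pd n q) := by
    intro j hj
    exact X.pd_sub q n j (Finset.mem_range.mp hj) x (X.comp V (X.dproj B n j))
  rw [Finset.sum_congr rfl hs]

end CDC
namespace CDC

variable {k : Type w} [CommSemiring k]

/-- A *Faà di Bruno frame* for `p`: a tuple `(p(a₀), ∂⁽ᵐ¹⁾p(…), …, ∂⁽ᵐᵏ⁾p(…))` where each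
derivative slot is fed through a linear, padding-compatible selection map, and the total
order of derivatives is `t`. -/
inductive Frame (X : CDC k) {A B : X.Obj} (p : X.Hom A B) :
    (N K : ℕ) → X.Hom (X.pow A N) (X.pow B K) → ℕ → Prop
  | base (N : ℕ) : Frame X p N 0 (X.comp (X.th A N) p) 0
  | slot {N K t m : ℕ} {W : X.Hom (X.pow A N) (X.pow B K)}
      (σ : X.Hom (X.pow A N) (X.pow A m)) :
      Frame X p N K W t → 1 ≤ m → X.Lin σ → X.comp (X.pad A N) σ = X.pad A m →
      Frame X p N (K + 1) (X.lift W (X.comp σ (X.pd m p))) (t + m)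

/-- The additive closure of Faà di Bruno terms `W ≫ ∂⁽ᴷ⁾q` of total order `N`. -/
inductive Good (X : CDC k) {A B C : X.Obj} (p : X.Hom A B) (q : X.Hom B C) :
    (N : ℕ) → X.Hom (X.pow A N) C → Prop
  | zero (N : ℕ) : Good X p q N X.zero
  | gen {N K : ℕ} {W : X.Hom (X.pow A N) (X.pow B K)} {h : X.Hom (X.pow A N) C} :
      Frame X p N K W N → h = X.comp W (X.pd K q) → Good X p q N h
  | add {N : ℕ} {f g : X.Hom (X.pow A N) C} :
      Good X p q N f → Good X p q N g → Good X p q N (X.add f g)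

variable (X : CDC k)

theorem good_sum {A B C : X.Obj} {p : X.Hom A B} {q : X.Hom B C} {N : ℕ}
    (s : Finset ℕ) (f : ℕ → X.Hom (X.pow A N) C)
    (h : ∀ j ∈ s, Good X p q N (f j)) : Good X p q N (∑ j ∈ s, f j) := by
  induction s using Finset.induction_on with
  | empty => rw [Finset.sum_empty, ← X.zero_def]; exact Good.zero N
  | insert _ _ hni ih =>
      rw [Finset.sum_insert hni, ← X.add_def]
      exact Good.add (h _ (Finset.mem_insert_self _ _))
        (ih fun j hj => h j (Finset.mem_insert_of_mem hj))

theorem frame_fst {A B : X.Obj} {p : X.Hom A B} {N K t : ℕ}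
    {W : X.Hom (X.pow A N) (X.pow B K)} (fr : Frame X p N K W t) :
    Frame X p (N + 1) K (X.comp X.fst W) t := by
  induction fr with
  | base =>
      have key : X.comp (X.fst (A := X.pow A N) (B := A)) (X.comp (X.th A N) p)
          = X.comp (X.th A (N + 1)) p := by rw [← X.assoc, ← X.th_succ]; rfl
      erw [key]
      exact Frame.base (N + 1)
  | @slot K t m W σ fr hm hlin hpad ih =>
      have key : X.comp (X.fst (A := X.pow A N) (B := A)) (X.lift W (X.comp σ (X.pd m p)))
          = X.lift (X.comp X.fst W) (X.comp (X.comp X.fst σ) (X.pd m p)) := by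
        rw [X.comp_lift, X.assoc]
      erw [key]
      exact Frame.slot (N := N + 1) (X.comp (X.fst (A := X.pow A N) (B := A)) σ) ih hm (X.lin_comp X.lin_fst hlin)
        (by erw [← X.assoc, X.pad_succ, X.lift_fst, hpad])

theorem frame_th {A B : X.Obj} {p : X.Hom A B} {N K t : ℕ}
    {W : X.Hom (X.pow A N) (X.pow B K)} (fr : Frame X p N K W t) :
    X.comp W (X.th B K) = X.comp (X.th A N) p := by
  induction fr with
  | base => exact X.comp_id _
  | @slot K t m W σ fr hm hlin hpad ih =>
      erw [X.th_succ, ← X.assoc, X.lift_fst, ih]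

theorem frame_step {A B : X.Obj} {p : X.Hom A B} {N K t : ℕ}
    {W : X.Hom (X.pow A N) (X.pow B K)} (fr : Frame X p N K W t) :
    ∀ j, j < K → ∃ W' : X.Hom (X.pow A (N + 1)) (X.pow B K),
      Frame X p (N + 1) K W' (t + 1) ∧
      X.sset K j (X.comp X.fst W)
        (X.comp (X.comp (X.phi A N) (X.D W)) (X.dproj B K j)) = W' := by
  induction fr with
  | base => intro j hj; exact absurd hj (Nat.not_lt_zero j)
  | @slot K t m W σ fr hm hlin hpad ih =>
      intro j hj
      by_cases hjK : j = K
      · subst hjK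
        have hc : X.D (X.comp σ (X.pd m p))
            = X.comp (X.lift (X.comp X.fst σ) (X.comp X.snd σ)) (X.D (X.pd m p)) :=
          X.D_pre_lin _ hlin
        have hphiL : X.comp (X.phi A N) (X.lift (X.comp X.fst σ) (X.comp X.snd σ))
            = X.lift (X.comp X.fst σ) (X.comp X.snd (X.pad A m)) := by
          erw [X.comp_lift, ← X.assoc, X.phi_fst, ← X.assoc, X.phi_snd, X.assoc, hpad]; rfl
        have hV : X.comp (X.comp (X.phi A N) (X.D (X.lift W (X.comp σ (X.pd m p)))))
              (X.dproj B (j + 1) j)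
            = X.comp (X.lift (X.comp X.fst σ) X.snd) (X.pd (m + 1) p) := by
          erw [X.dproj_top, X.CD4, X.assoc, X.lift_snd, hc, ← X.assoc, hphiL,
            ← X.lift_comp_phi, X.assoc, ← X.pd_succ]; rfl
        have hx : X.comp (X.comp (X.fst (A := X.pow A N) (B := A))
              (X.lift W (X.comp σ (X.pd m p)))) X.fst
            = X.comp X.fst W := by
          rw [X.assoc, X.lift_fst]
        refine ⟨X.lift (X.comp X.fst W)
          (X.comp (X.lift (X.comp X.fst σ) X.snd) (X.pd (m + 1) p)), ?_, ?_⟩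
        · exact Frame.slot (N := N + 1) (m := m + 1)
            (X.lift (X.comp (X.fst (A := X.pow A N) (B := A)) σ)
              (X.snd (A := X.pow A N) (B := A)))
            (X.frame_fst fr)
            (Nat.le_add_left 1 m) (X.lin_lift (X.lin_comp X.lin_fst hlin) X.lin_snd)
            (by erw [X.comp_lift, ← X.assoc, X.pad_succ, X.lift_fst, X.lift_snd, hpad,
                  ← X.pad_succ])
        · erw [X.sset_top, hx, hV]; rfl
      · have hj' : j < K := lt_of_le_of_ne (Nat.lt_succ_iff.mp hj) hjK
        obtain ⟨U', frU', hU'⟩ := ih j hj'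
        refine ⟨X.lift U' (X.comp (X.comp X.fst σ) (X.pd m p)), ?_, ?_⟩
        · have hfr := Frame.slot (N := N + 1)
            (X.comp (X.fst (A := X.pow A N) (B := A)) σ) frU' hm (X.lin_comp X.lin_fst hlin)
            (by erw [← X.assoc, X.pad_succ, X.lift_fst, hpad])
          have harith : t + 1 + m = t + m + 1 := Nat.add_right_comm t 1 m
          rw [harith] at hfr
          exact hfr
        · have hx1 : X.comp (X.comp (X.fst (A := X.pow A N) (B := A))
                (X.lift W (X.comp σ (X.pd m p)))) X.fst
              = X.comp X.fst W := by rw [X.assoc, X.lift_fst]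
          have hx2 : X.comp (X.comp (X.fst (A := X.pow A N) (B := A))
                (X.lift W (X.comp σ (X.pd m p)))) X.snd
              = X.comp (X.comp X.fst σ) (X.pd m p) := by
            rw [X.assoc, X.lift_snd, X.assoc]
          have hv : X.comp (X.comp (X.phi A N) (X.D (X.lift W (X.comp σ (X.pd m p)))))
                (X.dproj B (K + 1) j)
              = X.comp (X.comp (X.phi A N) (X.D W)) (X.dproj B K j) := by
            rw [X.dproj_lt hjK, X.CD4, X.assoc,
              ← X.assoc (X.lift (X.D W) (X.D (X.comp σ (X.pd m p)))) X.fst (X.dproj B K j),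
              X.lift_fst, ← X.assoc]
          erw [X.sset_lt hjK, hx1, hx2, hv, hU']; rfl

theorem good_step {A B C : X.Obj} {p : X.Hom A B} {q : X.Hom B C} {N : ℕ}
    {h : X.Hom (X.pow A N) C} (hg : Good X p q N h) :
    Good X p q (N + 1) (X.comp (X.phi A N) (X.D h)) := by
  induction hg with
  | zero => rw [X.D_zero, X.comp_zero]; exact Good.zero _
  | @add f g hf hg ihf ihg => rw [X.D_add, X.comp_add]; exact Good.add ihf ihg
  | @gen K W hh fr heq =>
      subst heq
      rw [X.CD5, ← X.assoc, X.comp_lift, ← X.assoc, X.phi_fst]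
      rw [X.expand]
      refine Good.add ?_ ?_
      · have hbase : X.comp (X.comp (X.phi A N) (X.D W)) (X.th B K)
            = X.comp (X.lift (X.th A (N + 1)) X.snd) (X.pd 1 p) := by
          erw [X.assoc, ← X.D_post_lin _ (X.lin_th B K), X.frame_th fr,
            X.D_pre_lin _ (X.lin_th A N), ← X.assoc, X.comp_lift,
            ← X.assoc, X.phi_fst, ← X.assoc, X.phi_snd, X.assoc, X.pad_th, X.comp_id,
            ← X.th_succ, ← X.pd_one]
        rw [hbase]
        exact Good.gen (Frame.slot (N := N + 1) (m := 1) (X.lift (X.th A (N + 1)) X.snd) (X.frame_fst fr)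
          (le_refl 1) (X.lin_lift (X.lin_th A (N + 1)) X.lin_snd)
          (by erw [X.comp_lift, X.pad_th, X.pad_succ, X.lift_snd]; rfl)) rfl
      · refine X.good_sum _ _ ?_
        intro j hj
        obtain ⟨W', fr', hW'⟩ := X.frame_step fr j (Finset.mem_range.mp hj)
        erw [hW']
        exact Good.gen fr' rfl

theorem good_pd {A B C : X.Obj} (p : X.Hom A B) (q : X.Hom B C) (N : ℕ) :
    Good X p q (N + 1) (X.pd (N + 1) (X.comp p q)) := by
  induction N with
  | zero =>
      refine Good.gen (K := 1) (W := X.lift (X.comp (X.th A 1) p)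
        (X.comp (X.idm (X.pow A 1)) (X.pd 1 p)))
        (Frame.slot (X.idm (X.pow A 1)) (Frame.base 1) (le_refl 1) X.lin_id
          (X.comp_id _)) ?_
      have h1 : X.th A 1 = X.fst (A := A) (B := A) := X.comp_id _
      rw [X.pd_one, X.CD5, X.id_comp, X.pd_one, X.pd_one, h1]
      rfl
  | succ N ih =>
      rw [X.pd_succ]
      exact X.good_step ih

theorem pd_mono_zero {A B : X.Obj} {f : X.Hom A B} {a : ℕ} (h : X.pd a f = X.zero) :
    ∀ b, a ≤ b → X.pd b f = X.zero := by
  intro b hab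
  induction b with
  | zero => rw [Nat.le_zero.mp hab] at h; exact h
  | succ b ihb =>
      rcases Nat.lt_or_ge a (b + 1) with hlt | hge
      · have hb : X.pd b f = X.zero := ihb (Nat.lt_succ_iff.mp hlt)
        rw [X.pd_succ, hb, X.D_zero, X.comp_zero]
      · have he : a = b + 1 := le_antisymm hab hge
        rw [he] at h; exact h

theorem frame_zero_slot {A B : X.Obj} {p : X.Hom A B} (m : ℕ)
    (hp : X.pd (m + 1) p = X.zero) {N K t : ℕ}
    {W : X.Hom (X.pow A N) (X.pow B K)} (fr : Frame X p N K W t) :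
    K * m < t → ∃ j, j < K ∧ X.sset K j W X.zero = W := by
  induction fr with
  | base => intro hlt; exact absurd hlt (by omega)
  | @slot K t m' W σ fr hm hlin hpad ih =>
      intro hlt
      by_cases hmm : m < m'
      · have hz : X.pd m' p = X.zero := X.pd_mono_zero hp m' hmm
        have hc : X.comp σ (X.pd m' p) = X.zero := by rw [hz, X.comp_zero]
        refine ⟨K, Nat.lt_succ_self K, ?_⟩
        erw [X.sset_top, X.lift_fst, hc]
      · have hle : m' ≤ m := Nat.le_of_not_lt hmm
        have hlt' : K * m < t := by
          have e : (K + 1) * m = K * m + m := Nat.succ_mul K m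
          omega
        obtain ⟨j, hj, hss⟩ := ih hlt'
        refine ⟨j, Nat.lt_succ_of_lt hj, ?_⟩
        erw [X.sset_lt (Nat.ne_of_lt hj), X.lift_fst, X.lift_snd, hss]

theorem good_vanish {A B C : X.Obj} {p : X.Hom A B} {q : X.Hom B C} (m n : ℕ)
    (hp : X.pd (m + 1) p = X.zero) (hq : X.pd (n + 1) q = X.zero) :
    ∀ {N : ℕ} {h : X.Hom (X.pow A N) C}, Good X p q N h → N = m * n + 1 → h = X.zero := by
  intro N h hg
  induction hg with
  | zero => intro _; rfl
  | @add f g hf hg ihf ihg =>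
      intro hN
      rw [ihf hN, ihg hN, X.zero_add]
  | @gen K W hh fr heq =>
      intro hN
      subst hN
      by_cases hK : n + 1 ≤ K
      · have hzq : X.pd K q = X.zero := X.pd_mono_zero hq K hK
        rw [heq, hzq, X.comp_zero]
      · have hKn : K ≤ n := by omega
        have hlt : K * m < m * n + 1 := by
          have h1 : K * m ≤ n * m := Nat.mul_le_mul_right m hKn
          have h2 : n * m = m * n := Nat.mul_comm n m
          omega
        obtain ⟨j, hj, hss⟩ := X.frame_zero_slot m hp fr hlt
        rw [heq, ← hss]
        exact X.pd_slot_zero q K j hj W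

end CDC

/-- `D`-polynomials are closed under composition, and
`deg (q ∘ p) ≤ deg p * deg q`. -/
theorem isPoly_comp {k : Type w} [CommSemiring k] (X : CDC k)
    {A B C : X.Obj} (p : X.Hom A B) (q : X.Hom B C)
    (hp : X.IsPoly p) (hq : X.IsPoly q) :
    X.IsPoly (X.comp p q) ∧ X.deg (X.comp p q) ≤ X.deg p * X.deg q := by
  have hpm : X.pd (X.deg p + 1) p = X.zero := Nat.sInf_mem hp
  have hqn : X.pd (X.deg q + 1) q = X.zero := Nat.sInf_mem hq
  have key : X.pd (X.deg p * X.deg q + 1) (X.comp p q) = X.zero :=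
    X.good_vanish (X.deg p) (X.deg q) hpm hqn (X.good_pd p q (X.deg p * X.deg q)) rfl
  exact ⟨⟨X.deg p * X.deg q, key⟩, Nat.sInf_le key⟩
end

section
/- In a Cartesian k-differential category over a ℚ≥0-algebra k, for any map f: M^(k)[T^(n)[f]] = M^(k)[f] for k ≤ n, and M^(k)[T^(n)[f]] = 0 for n < k, where T^(n)[f] = Σ_{k=0}^{n} M^(k)[f]. -/
/-! A self-contained formalization of (Cartesian) `k`-differential categories. -/

universe u v w

namespace MTaux

variable {k : Type w} [CommSemiring k] {X : CDC k}

/-! ### Basic consequences of the axioms -/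

theorem add_zero' {A B : X.Obj} (f : X.Hom A B) : X.add f X.zero = f := by
  rw [X.add_comm]; exact X.zero_add f

theorem comp_lift {A B C D : X.Obj} (h : X.Hom A B) (a : X.Hom B C) (b : X.Hom B D) :
    X.comp h (X.lift a b) = X.lift (X.comp h a) (X.comp h b) := by
  conv_lhs => rw [← X.lift_unique (X.comp h (X.lift a b))]
  rw [X.assoc, X.assoc, X.lift_fst, X.lift_snd]

theorem lift_add {A B C : X.Obj} (a b : X.Hom C A) (c d : X.Hom C B) :
    X.lift (X.add a b) (X.add c d) = X.add (X.lift a c) (X.lift b d) := by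
  have h := X.lift_unique (X.add (X.lift a c) (X.lift b d))
  rw [X.fst_add, X.snd_add, X.lift_fst, X.lift_fst, X.lift_snd, X.lift_snd] at h
  exact h

theorem lift_smul {A B C : X.Obj} (r : k) (a : X.Hom C A) (c : X.Hom C B) :
    X.lift (X.smul r a) (X.smul r c) = X.smul r (X.lift a c) := by
  have h := X.lift_unique (X.smul r (X.lift a c))
  rw [X.fst_smul, X.snd_smul, X.lift_fst, X.lift_snd] at h
  exact h

theorem zero_fst {A B C : X.Obj} :
    X.comp (X.zero : X.Hom C (X.prod A B)) X.fst = X.zero := by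
  rw [← X.zero_smul (X.zero : X.Hom C (X.prod A B)), X.fst_smul, X.zero_smul]

theorem zero_snd {A B C : X.Obj} :
    X.comp (X.zero : X.Hom C (X.prod A B)) X.snd = X.zero := by
  rw [← X.zero_smul (X.zero : X.Hom C (X.prod A B)), X.snd_smul, X.zero_smul]

theorem lift_zero {A B C : X.Obj} :
    X.lift (X.zero : X.Hom C A) (X.zero : X.Hom C B) = X.zero := by
  have h := X.lift_unique (X.zero : X.Hom C (X.prod A B))
  rw [zero_fst, zero_snd] at h
  exact h

theorem lift_fst_snd {A B : X.Obj} :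
    X.lift (X.fst : X.Hom (X.prod A B) A) X.snd = X.idm (X.prod A B) := by
  have h := X.lift_unique (X.idm (X.prod A B))
  rwa [X.id_comp, X.id_comp] at h

theorem D_add {A B : X.Obj} (f g : X.Hom A B) : X.D (X.add f g) = X.add (X.D f) (X.D g) := by
  have h := X.CD1 1 1 f g
  rwa [X.one_smul, X.one_smul, X.one_smul, X.one_smul] at h

theorem D_smul {A B : X.Obj} (r : k) (f : X.Hom A B) : X.D (X.smul r f) = X.smul r (X.D f) := by
  have h := X.CD1 r 0 f f
  rwa [X.zero_smul, X.zero_smul, add_zero', add_zero'] at h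

theorem D_zero {A B : X.Obj} : X.D (X.zero : X.Hom A B) = X.zero := by
  have h := X.CD1 0 0 (X.zero : X.Hom A B) X.zero
  rwa [X.zero_smul, X.zero_smul, X.zero_add, X.zero_add] at h

theorem Dlast_add {A B C : X.Obj} (g : X.Hom A B) (a b c : X.Hom C A) :
    X.comp (X.lift a (X.add b c)) (X.D g)
      = X.add (X.comp (X.lift a b) (X.D g)) (X.comp (X.lift a c) (X.D g)) := by
  have h := X.CD2 g 1 1 a b c
  rwa [X.one_smul, X.one_smul, X.one_smul, X.one_smul] at h

theorem Dlast_smul {A B C : X.Obj} (g : X.Hom A B) (r : k) (a b : X.Hom C A) :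
    X.comp (X.lift a (X.smul r b)) (X.D g) = X.smul r (X.comp (X.lift a b) (X.D g)) := by
  have h := X.CD2 g r 0 a b b
  rwa [X.zero_smul, X.zero_smul, add_zero', add_zero'] at h

theorem Dlast_zero {A B C : X.Obj} (g : X.Hom A B) (a : X.Hom C A) :
    X.comp (X.lift a X.zero) (X.D g) = X.zero := by
  have h := X.CD2 g 0 0 a X.zero X.zero
  rwa [X.zero_smul, X.zero_smul, X.zero_add, X.zero_add] at h

end MTaux
namespace MTaux

variable {k : Type w} [CommSemiring k] {X : CDC k}

/-! ### Linear maps -/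

/-- A map is (`D`-)linear if its derivative is `snd` followed by itself. -/
def Lin {A B : X.Obj} (g : X.Hom A B) : Prop := X.D g = X.comp X.snd g

theorem lin_idm {A : X.Obj} : Lin (X.idm A) := by
  unfold Lin; rw [X.CD3id, X.comp_id]

theorem lin_fst {A B : X.Obj} : Lin (X.fst : X.Hom (X.prod A B) A) := X.CD3fst

theorem lin_snd {A B : X.Obj} : Lin (X.snd : X.Hom (X.prod A B) B) := X.CD3snd

theorem lin_zero {A B : X.Obj} : Lin (X.zero : X.Hom A B) := by
  unfold Lin; rw [D_zero, X.comp_zero]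

theorem lin_comp {A B C : X.Obj} {g : X.Hom A B} {h : X.Hom B C} (hg : Lin g) (hh : Lin h) :
    Lin (X.comp g h) := by
  unfold Lin
  rw [X.CD5, hg, hh, ← X.assoc, X.lift_snd, X.assoc]

theorem lin_lift {A B C : X.Obj} {g : X.Hom A B} {h : X.Hom A C} (hg : Lin g) (hh : Lin h) :
    Lin (X.lift g h) := by
  unfold Lin
  rw [X.CD4, hg, hh, comp_lift]

theorem lin_add {A B : X.Obj} {g h : X.Hom A B} (hg : Lin g) (hh : Lin h) :
    Lin (X.add g h) := by
  unfold Lin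
  rw [D_add, hg, hh, X.comp_add]

theorem lin_smul {A B : X.Obj} (r : k) {g : X.Hom A B} (hg : Lin g) :
    Lin (X.smul r g) := by
  unfold Lin
  rw [D_smul, hg, X.comp_smul]

/-- Precomposition with anything is determined by `D` for linear maps:
`x ; g = ⟨anything, x⟩ ; D g`. -/
theorem lin_arg {A B C : X.Obj} {g : X.Hom A B} (hg : Lin g) (a x : X.Hom C A) :
    X.comp x g = X.comp (X.lift a x) (X.D g) := by
  rw [hg, ← X.assoc, X.lift_snd]

theorem lin_smul_comp {A B C : X.Obj} {g : X.Hom A B} (hg : Lin g) (r : k) (x : X.Hom C A) :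
    X.comp (X.smul r x) g = X.smul r (X.comp x g) := by
  rw [lin_arg hg X.zero (X.smul r x), Dlast_smul, ← lin_arg hg]

theorem lin_add_comp {A B C : X.Obj} {g : X.Hom A B} (hg : Lin g) (x y : X.Hom C A) :
    X.comp (X.add x y) g = X.add (X.comp x g) (X.comp y g) := by
  rw [lin_arg hg X.zero (X.add x y), Dlast_add, ← lin_arg hg, ← lin_arg hg]

theorem lin_zero_comp {A B C : X.Obj} {g : X.Hom A B} (hg : Lin g) :
    X.comp (X.zero : X.Hom C A) g = X.zero := by
  rw [← X.zero_smul (X.zero : X.Hom C A), lin_smul_comp hg, X.zero_smul]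

/-- Chain rule for a linear map precomposed. -/
theorem chain_lin {A B C : X.Obj} {l : X.Hom A B} (hl : Lin l) (h : X.Hom B C) :
    X.D (X.comp l h) = X.comp (X.lift (X.comp X.fst l) (X.comp X.snd l)) (X.D h) := by
  rw [X.CD5, hl]

theorem lin_pad {A : X.Obj} (n : ℕ) : Lin (X.pad A n) := by
  induction n with
  | zero => exact lin_idm
  | succ n ih => exact lin_lift ih lin_zero

theorem lin_diag {A : X.Obj} (n : ℕ) : Lin (X.diag A n) := by
  induction n with
  | zero => exact lin_zero
  | succ n ih => exact lin_lift ih lin_idm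

/-! ### Basic facts about `pd` -/

theorem pd_succ {A B : X.Obj} (n : ℕ) (f : X.Hom A B) :
    X.pd (n+1) f = X.comp (X.lift X.fst (X.comp X.snd (X.pad A n))) (X.D (X.pd n f)) := rfl

/-- Plugging an argument into `pd (n+1)`. -/
theorem pd_arg {A B C : X.Obj} (n : ℕ) (f : X.Hom A B)
    (Q : X.Hom C (X.pow A n)) (t : X.Hom C A) :
    X.comp (X.lift Q t) (X.pd (n+1) f)
      = X.comp (X.lift Q (X.comp t (X.pad A n))) (X.D (X.pd n f)) := by
  rw [pd_succ, ← X.assoc, comp_lift, X.lift_fst, ← X.assoc, X.lift_snd]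

theorem pd_one {A B : X.Obj} (f : X.Hom A B) : X.pd 1 f = X.D f := by
  show X.comp (X.lift X.fst (X.comp X.snd (X.idm A))) (X.D f) = X.D f
  erw [X.comp_id, lift_fst_snd, X.id_comp]

theorem pd_zero {A B : X.Obj} (n : ℕ) : X.pd n (X.zero : X.Hom A B) = X.zero := by
  induction n with
  | zero => rfl
  | succ n ih => erw [pd_succ, ih, D_zero, X.comp_zero]; rfl

theorem pd_add {A B : X.Obj} (n : ℕ) (f g : X.Hom A B) :
    X.pd n (X.add f g) = X.add (X.pd n f) (X.pd n g) := by
  induction n with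
  | zero => rfl
  | succ n ih => erw [pd_succ, ih, D_add, X.comp_add, pd_succ, pd_succ]; rfl

theorem pd_smul {A B : X.Obj} (n : ℕ) (r : k) (f : X.Hom A B) :
    X.pd n (X.smul r f) = X.smul r (X.pd n f) := by
  induction n with
  | zero => rfl
  | succ n ih => rw [pd_succ, ih, D_smul, X.comp_smul, pd_succ]; rfl

/-! ### `powMap` and the chain rule through `pd` -/

/-- Apply a map slotwise on `pow`. -/
def powMap {A B : X.Obj} (l : X.Hom A B) : (m : ℕ) → X.Hom (X.pow A m) (X.pow B m)
  | 0 => l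
  | m + 1 => X.lift (X.comp X.fst (powMap l m)) (X.comp X.snd l)

theorem powMap_succ {A B : X.Obj} (l : X.Hom A B) (m : ℕ) :
    powMap l (m+1) = X.lift (X.comp X.fst (powMap l m)) (X.comp X.snd l) := rfl

theorem lin_powMap {A B : X.Obj} {l : X.Hom A B} (hl : Lin l) (m : ℕ) :
    Lin (powMap l m) := by
  induction m with
  | zero => exact hl
  | succ m ih => exact lin_lift (lin_comp lin_fst ih) (lin_comp lin_snd hl)

theorem pad_powMap {A B : X.Obj} {l : X.Hom A B} (hl : Lin l) (m : ℕ) :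
    X.comp (X.pad A m) (powMap l m) = X.comp l (X.pad B m) := by
  induction m with
  | zero => show X.comp (X.idm A) l = X.comp l (X.idm B); rw [X.id_comp, X.comp_id]
  | succ m ih =>
      show X.comp (X.lift (X.pad A m) X.zero) (X.lift (X.comp X.fst (powMap l m)) (X.comp X.snd l))
        = X.comp l (X.lift (X.pad B m) X.zero)
      rw [comp_lift, comp_lift, ← X.assoc, ← X.assoc, X.lift_fst, X.lift_snd, ih,
        lin_zero_comp hl, X.comp_zero]

/-- Chain rule through `pd` for linear maps. -/
theorem pd_lin {A B C : X.Obj} {l : X.Hom A B} (hl : Lin l) (m : ℕ) (h : X.Hom B C) :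
    X.pd m (X.comp l h) = X.comp (powMap l m) (X.pd m h) := by
  induction m with
  | zero => rfl
  | succ m ih =>
      have eL : X.comp (X.lift X.fst (X.comp X.snd (X.pad A m)))
          (X.lift (X.comp X.fst (powMap l m)) (X.comp X.snd (powMap l m)))
          = X.lift (X.comp X.fst (powMap l m)) (X.comp (X.comp X.snd l) (X.pad B m)) := by
        rw [comp_lift, ← X.assoc, X.lift_fst, ← X.assoc, X.lift_snd, X.assoc, pad_powMap hl,
          ← X.assoc]
      have eR : X.comp (powMap l (m+1)) (X.lift X.fst (X.comp X.snd (X.pad B m)))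
          = X.lift (X.comp X.fst (powMap l m)) (X.comp (X.comp X.snd l) (X.pad B m)) := by
        erw [comp_lift, powMap_succ, X.lift_fst, ← X.assoc, X.lift_snd]; rfl
      erw [pd_succ, ih, chain_lin (lin_powMap hl m), ← X.assoc, eL,
        pd_succ (n := m) (f := h), ← X.assoc, eR]; rfl

end MTaux
namespace MTaux

variable {k : Type w} [CommSemiring k] {X : CDC k}

/-! ### Second-order lemmas -/

theorem pad_succ {A : X.Obj} (n : ℕ) : X.pad A (n+1) = X.lift (X.pad A n) X.zero := rfl

/-- Unfolding `D (pd (n+1) f)` applied to a pair of arguments. -/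
theorem Dpd_arg {A B C : X.Obj} (n : ℕ) (f : X.Hom A B) (T V : X.Hom C (X.pow A (n+1))) :
    X.comp (X.lift T V) (X.D (X.pd (n+1) f))
      = X.comp (X.lift
          (X.lift (X.comp T X.fst) (X.comp (X.comp T X.snd) (X.pad A n)))
          (X.lift (X.comp V X.fst) (X.comp (X.comp V X.snd) (X.pad A n))))
        (X.D (X.D (X.pd n f))) := by
  have hPhi : Lin (X.lift (X.fst : X.Hom (X.prod (X.pow A n) A) _) (X.comp X.snd (X.pad A n))) :=
    lin_lift lin_fst (lin_comp lin_snd (lin_pad n))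
  erw [pd_succ, chain_lin hPhi, ← X.assoc]
  congr 1
  erw [comp_lift, ← X.assoc, ← X.assoc, comp_lift, comp_lift, ← X.assoc, X.lift_fst,
    ← X.assoc, X.lift_snd]; rfl

/-- A strengthened form of **[CD.6]**. -/
theorem CD6' {A B C : X.Obj} (g : X.Hom A B) (a c b : X.Hom C A) :
    X.comp (X.lift (X.lift a c) (X.lift X.zero b)) (X.D (X.D g)) = X.comp (X.lift a b) (X.D g) := by
  rw [X.CD7]
  have e : X.lift c b = X.add (X.lift c X.zero) (X.lift X.zero b) := by
    rw [← lift_add, add_zero', X.zero_add]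
  rw [e, Dlast_add, X.CD7 g a X.zero c X.zero, lift_zero, Dlast_zero, X.zero_add, X.CD6]

/-- Derivative of `pd (N+1) f` in a direction supported only on the outermost slot
is substitution into that slot. -/
theorem singleTop {A B C : X.Obj} (N : ℕ) (f : X.Hom A B)
    (T : X.Hom C (X.pow A (N+1))) (a : X.Hom C A) :
    X.comp (X.lift T (X.lift X.zero a)) (X.D (X.pd (N+1) f))
      = X.comp (X.lift (X.comp T X.fst) a) (X.pd (N+1) f) := by
  erw [Dpd_arg, X.lift_fst, X.lift_snd, CD6', ← pd_arg]

/-- Unfolding `pd (N+2) f` to a second derivative. -/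
theorem pd_two {A B : X.Obj} (N : ℕ) (f : X.Hom A B) :
    X.pd (N+2) f
      = X.comp (X.lift
          (X.lift (X.comp X.fst X.fst) (X.comp (X.comp X.fst X.snd) (X.pad A N)))
          (X.lift (X.comp X.snd (X.pad A N)) X.zero))
        (X.D (X.D (X.pd N f))) := by
  have cA : X.comp (X.comp (X.snd : X.Hom (X.pow A (N+2)) A) (X.pad A (N+1))) X.fst
      = X.comp X.snd (X.pad A N) := by
    erw [X.assoc, pad_succ, X.lift_fst]
  have cB1 : X.comp (X.comp (X.snd : X.Hom (X.pow A (N+2)) A) (X.pad A (N+1))) X.snd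
      = X.zero := by
    erw [X.assoc, pad_succ, X.lift_snd, X.comp_zero]
  rw [pd_succ (n := N+1) (f := f), Dpd_arg, cA, cB1, lin_zero_comp (lin_pad N)]; rfl

/-- Swap of the two outermost slots. -/
def swpTop {A : X.Obj} (N : ℕ) : X.Hom (X.pow A (N+2)) (X.pow A (N+2)) :=
  X.lift (X.lift (X.comp X.fst X.fst) X.snd) (X.comp X.fst X.snd)

theorem lin_swpTop {A : X.Obj} (N : ℕ) : Lin (swpTop (A := A) (X := X) N) :=
  lin_lift (lin_lift (lin_comp lin_fst lin_fst) lin_snd) (lin_comp lin_fst lin_snd)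

/-- `pd` is invariant under swapping the two outermost slots. -/
theorem swpTop_pd {A B : X.Obj} (N : ℕ) (f : X.Hom A B) :
    X.comp (swpTop N) (X.pd (N+2) f) = X.pd (N+2) f := by
  have c1 : X.comp (swpTop (A := A) (X := X) N) (X.comp X.fst X.fst) = X.comp X.fst X.fst := by
    erw [swpTop, ← X.assoc, X.lift_fst, X.lift_fst]; rfl
  have c2 : X.comp (swpTop (A := A) (X := X) N) (X.comp (X.comp X.fst X.snd) (X.pad A N))
      = X.comp X.snd (X.pad A N) := by
    erw [← X.assoc, swpTop, ← X.assoc, X.lift_fst, X.lift_snd]; rfl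
  have c3 : X.comp (swpTop (A := A) (X := X) N) (X.comp X.snd (X.pad A N))
      = X.comp (X.comp X.fst X.snd) (X.pad A N) := by
    erw [← X.assoc, swpTop, X.lift_snd]; rfl
  erw [pd_two, ← X.assoc, comp_lift, comp_lift, comp_lift, X.comp_zero, c1, c2, c3,
    X.CD7, ← pd_two]

end MTaux
namespace MTaux

variable {k : Type w} [CommSemiring k] {X : CDC k}

/-! ### Stacked tuples -/

/-- `stk C I β x : W → A^{C+I}` is the tuple `(β, x, x, …, x)` (`I` copies of `x` on top). -/
def stk {W A : X.Obj} (C0 : ℕ) : (I : ℕ) → X.Hom W (X.pow A C0) → X.Hom W A →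
    X.Hom W (X.pow A (C0 + I))
  | 0, β, _ => β
  | I+1, β, x => X.lift (stk C0 I β x) x

theorem stk_succ {W A : X.Obj} (C0 I : ℕ) (β : X.Hom W (X.pow A C0)) (x : X.Hom W A) :
    stk C0 (I+1) β x = X.lift (stk C0 I β x) x := rfl

theorem stk_pre {W W' A : X.Obj} (C0 I : ℕ) (u : X.Hom W' W)
    (β : X.Hom W (X.pow A C0)) (x : X.Hom W A) :
    X.comp u (stk C0 I β x) = stk C0 I (X.comp u β) (X.comp u x) := by
  induction I with
  | zero => rfl
  | succ I ih => erw [stk_succ, comp_lift, ih, stk_succ]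

theorem lin_stk {W A : X.Obj} (C0 I : ℕ) {β : X.Hom W (X.pow A C0)} {x : X.Hom W A}
    (hβ : Lin β) (hx : Lin x) : Lin (stk C0 I β x) := by
  induction I with
  | zero => exact hβ
  | succ I ih => exact lin_lift ih hx

theorem stk_pad {W A : X.Obj} (C0 I : ℕ) (t : X.Hom W A) :
    stk C0 I (X.comp t (X.pad A C0)) X.zero = X.comp t (X.pad A (C0 + I)) := by
  induction I with
  | zero => rfl
  | succ I ih =>
      erw [stk_succ, ih, show X.pad A (C0+(I+1)) = X.lift (X.pad A (C0+I)) X.zero from rfl,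
        comp_lift, X.comp_zero]

theorem stk_zero {W A : X.Obj} (C0 I : ℕ) :
    stk C0 I (X.zero : X.Hom W (X.pow A C0)) (X.zero : X.Hom W A) = X.zero := by
  induction I with
  | zero => rfl
  | succ I ih => rw [stk_succ, ih, lift_zero]; rfl

theorem pad_arg {W A : X.Obj} (n : ℕ) (t : X.Hom W A) :
    X.comp t (X.pad A (n+1)) = X.lift (X.comp t (X.pad A n)) X.zero := by
  erw [pad_succ, comp_lift, X.comp_zero]

/-! ### Transport of identities under `D` -/

theorem D_transport {W' A1 A2 B : X.Obj} {L : X.Hom W' A1} {R : X.Hom W' A2}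
    {H1 : X.Hom A1 B} {H2 : X.Hom A2 B} (hL : Lin L) (hR : Lin R)
    (h : X.comp L H1 = X.comp R H2) {W : X.Obj} (u v : X.Hom W W') :
    X.comp (X.lift (X.comp u L) (X.comp v L)) (X.D H1)
      = X.comp (X.lift (X.comp u R) (X.comp v R)) (X.D H2) := by
  have hD := congrArg X.D h
  rw [chain_lin hL, chain_lin hR] at hD
  calc X.comp (X.lift (X.comp u L) (X.comp v L)) (X.D H1)
      = X.comp (X.lift u v)
          (X.comp (X.lift (X.comp X.fst L) (X.comp X.snd L)) (X.D H1)) := by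
        rw [← X.assoc, comp_lift, ← X.assoc, ← X.assoc, X.lift_fst, X.lift_snd]
    _ = X.comp (X.lift u v)
          (X.comp (X.lift (X.comp X.fst R) (X.comp X.snd R)) (X.D H2)) := by rw [hD]
    _ = X.comp (X.lift (X.comp u R) (X.comp v R)) (X.D H2) := by
        rw [← X.assoc, comp_lift, ← X.assoc, ← X.assoc, X.lift_fst, X.lift_snd]

theorem D_transport_smul {W' A1 A2 B : X.Obj} {L : X.Hom W' A1} {R : X.Hom W' A2}
    {H1 : X.Hom A1 B} {H2 : X.Hom A2 B} (hL : Lin L) (hR : Lin R) {r : k}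
    (h : X.comp L H1 = X.smul r (X.comp R H2)) {W : X.Obj} (u v : X.Hom W W') :
    X.comp (X.lift (X.comp u L) (X.comp v L)) (X.D H1)
      = X.smul r (X.comp (X.lift (X.comp u R) (X.comp v R)) (X.D H2)) := by
  have hD := congrArg X.D h
  rw [chain_lin hL, D_smul, chain_lin hR] at hD
  calc X.comp (X.lift (X.comp u L) (X.comp v L)) (X.D H1)
      = X.comp (X.lift u v)
          (X.comp (X.lift (X.comp X.fst L) (X.comp X.snd L)) (X.D H1)) := by
        rw [← X.assoc, comp_lift, ← X.assoc, ← X.assoc, X.lift_fst, X.lift_snd]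
    _ = X.comp (X.lift u v)
          (X.smul r (X.comp (X.lift (X.comp X.fst R) (X.comp X.snd R)) (X.D H2))) := by rw [hD]
    _ = X.smul r (X.comp (X.lift (X.comp u R) (X.comp v R)) (X.D H2)) := by
        rw [X.comp_smul, ← X.assoc, comp_lift, ← X.assoc, ← X.assoc, X.lift_fst, X.lift_snd]

/-- Swapping the two outermost arguments of `pd (M+2)`. -/
theorem swp_arg {W A B : X.Obj} (M : ℕ) (f : X.Hom A B)
    (Q : X.Hom W (X.pow A M)) (a x : X.Hom W A) :
    X.comp (X.lift (X.lift Q a) x) (X.pd (M+1+1) f)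
      = X.comp (X.lift (X.lift Q x) a) (X.pd (M+1+1) f) := by
  show X.comp (X.lift (X.lift Q a) x) (X.pd (M+2) f)
      = X.comp (X.lift (X.lift Q x) a) (X.pd (M+2) f)
  have hc : X.comp (X.lift (X.lift Q a) x) (swpTop (A := A) (X := X) M)
      = X.lift (X.lift Q x) a := by
    erw [swpTop, comp_lift, comp_lift, ← X.assoc, X.lift_fst, X.lift_fst, X.lift_snd,
      ← X.assoc, X.lift_fst, X.lift_snd]; rfl
  conv_lhs => erw [← swpTop_pd M f, ← X.assoc, hc]
  rfl

end MTaux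
namespace MTaux

variable {k : Type w} [CommSemiring k] {X : CDC k}

/-- The value of the key directional-derivative computation. -/
def aRHS {A B : X.Obj} (C0 : ℕ) (f : X.Hom A B) :
    (I : ℕ) → {W : X.Obj} → X.Hom W (X.pow A C0) → X.Hom W A → X.Hom W A → X.Hom W B
  | 0, _, _, _, _ => X.zero
  | I+1, _, β, x, a =>
      X.smul ((I+1 : ℕ) : k) (X.comp (X.lift (stk C0 I β x) a) (X.pd (C0+I+1) f))

theorem aRHS_succ {A B : X.Obj} (C0 I : ℕ) (f : X.Hom A B) {W : X.Obj}
    (β : X.Hom W (X.pow A C0)) (x a : X.Hom W A) :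
    aRHS C0 f (I+1) β x a
      = X.smul ((I+1 : ℕ) : k) (X.comp (X.lift (stk C0 I β x) a) (X.pd (C0+I+1) f)) := rfl

/-- **Key lemma.** The derivative of `pd` at a point of the form `(β, x, …, x)` in a
direction `(0, …, 0, a, …, a)` (`a` in the `I` outermost slots) equals
`I • pd (…) (β, x, …, x, a)` (with one fewer `x`, `a` substituted on top). -/
theorem aPart {A B : X.Obj} (C0 : ℕ) (f : X.Hom A B) :
    ∀ (I : ℕ) {W : X.Obj} (β : X.Hom W (X.pow A C0)) (x a : X.Hom W A),
    X.comp (X.lift (stk C0 I β x) (stk C0 I X.zero a)) (X.D (X.pd (C0+I) f))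
      = aRHS C0 f I β x a := by
  intro I
  induction I with
  | zero =>
      intro W β x a
      exact Dlast_zero _ _
  | succ I ih =>
      intro W β x a
      show X.comp (X.lift (stk C0 (I+1) β x) (stk C0 (I+1) X.zero a)) (X.D (X.pd (C0+I+1) f))
        = aRHS C0 f (I+1) β x a
      have esplit : stk C0 (I+1) (X.zero : X.Hom W (X.pow A C0)) a
          = X.add (X.lift (stk C0 I X.zero a) X.zero) (X.lift X.zero a) := by
        rw [← lift_add, add_zero', X.zero_add, stk_succ]
      erw [esplit, stk_succ, Dlast_add]
      have hT2 : X.comp (X.lift (X.lift (stk C0 I β x) x) (X.lift X.zero a))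
          (X.D (X.pd (C0+I+1) f))
          = X.comp (X.lift (stk C0 I β x) a) (X.pd (C0+I+1) f) := by
        erw [singleTop, X.lift_fst]
      erw [hT2]
      -- now the `F`-term
      cases I with
      | zero =>
          erw [show stk C0 0 (X.zero : X.Hom W (X.pow A C0)) a = X.zero from rfl, lift_zero,
            Dlast_zero, X.zero_add, aRHS_succ, show ((0+1 : ℕ) : k) = 1 by norm_num, X.one_smul]
      | succ I' =>
          have hF : X.comp (X.lift (X.lift (stk C0 (I'+1) β x) x)
                (X.lift (stk C0 (I'+1) X.zero a) X.zero))
              (X.D (X.pd (C0+(I'+1)+1) f))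
              = X.smul ((I'+1 : ℕ) : k)
                  (X.comp (X.lift (stk C0 (I'+1) β x) a) (X.pd (C0+(I'+1)+1) f)) := by
            -- expand one level
            erw [Dpd_arg, X.lift_fst, X.lift_fst, X.lift_snd, X.lift_snd,
              lin_zero_comp (lin_pad (C0+(I'+1))), X.CD7]
            -- transport the inductive hypothesis under `D`
            have hLu : Lin (X.lift
                (stk C0 (I'+1) (X.fst : X.Hom (X.prod (X.pow A C0) (X.prod A A)) _)
                  (X.comp X.snd X.fst))
                (stk C0 (I'+1) X.zero (X.comp X.snd X.snd))) :=
              lin_lift (lin_stk _ _ lin_fst (lin_comp lin_snd lin_fst))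
                (lin_stk _ _ lin_zero (lin_comp lin_snd lin_snd))
            have hRu : Lin (X.lift
                (stk C0 I' (X.fst : X.Hom (X.prod (X.pow A C0) (X.prod A A)) _)
                  (X.comp X.snd X.fst))
                (X.comp X.snd X.snd)) :=
              lin_lift (lin_stk _ _ lin_fst (lin_comp lin_snd lin_fst))
                (lin_comp lin_snd lin_snd)
            have hIH := ih (X.fst : X.Hom (X.prod (X.pow A C0) (X.prod A A)) _)
              (X.comp X.snd X.fst) (X.comp X.snd X.snd)
            rw [aRHS_succ] at hIH
            have htr := D_transport_smul hLu hRu hIH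
              (X.lift β (X.lift x a)) (X.lift (X.comp x (X.pad A C0)) X.zero)
            have pu1 : X.comp (X.lift β (X.lift x a))
                (X.fst : X.Hom (X.prod (X.pow A C0) (X.prod A A)) _) = β := X.lift_fst _ _
            have pu2 : X.comp (X.lift β (X.lift x a)) (X.comp X.snd X.fst) = x := by
              rw [← X.assoc, X.lift_snd, X.lift_fst]
            have pu3 : X.comp (X.lift β (X.lift x a)) (X.comp X.snd X.snd) = a := by
              rw [← X.assoc, X.lift_snd, X.lift_snd]
            have pw1 : X.comp (X.lift (X.comp x (X.pad A C0)) (X.zero : X.Hom W (X.prod A A)))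
                X.fst = X.comp x (X.pad A C0) := X.lift_fst _ _
            have pw2 : X.comp (X.lift (X.comp x (X.pad A C0)) (X.zero : X.Hom W (X.prod A A)))
                (X.comp X.snd X.fst) = X.zero := by
              rw [← X.assoc, X.lift_snd, zero_fst]
            have pw3 : X.comp (X.lift (X.comp x (X.pad A C0)) (X.zero : X.Hom W (X.prod A A)))
                (X.comp X.snd X.snd) = X.zero := by
              rw [← X.assoc, X.lift_snd, zero_snd]
            rw [comp_lift, comp_lift, comp_lift, comp_lift, stk_pre, stk_pre, stk_pre, stk_pre,
              stk_pre, stk_pre, pu1, pu2, pu3, pw1, pw2, pw3, X.comp_zero, X.comp_zero,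
              stk_pad, stk_pad, stk_zero] at htr
            erw [htr, ← pad_arg,
              ← pd_arg (n := C0+I'+1) (f := f) (Q := X.lift (stk C0 I' β x) a) (t := x),
              swp_arg]
            rfl
          erw [hF, aRHS_succ, show ((I'+1+1 : ℕ) : k) = ((I'+1 : ℕ) : k) + 1 by push_cast; ring,
            X.add_smul, X.one_smul]

end MTaux
namespace MTaux

variable {k : Type w} [CommSemiring k] {X : CDC k}

/-- Moving the outermost slot below a stack of `x`'s does not change `pd`. -/
theorem moveTop {A B : X.Obj} (C0 : ℕ) (f : X.Hom A B) :
    ∀ (I : ℕ) {W : X.Obj} (β : X.Hom W (X.pow A C0)) (x w2 : X.Hom W A),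
    X.comp (X.lift (stk C0 I β x) w2) (X.pd (C0+I+1) f)
      = X.comp (stk (C0+1) I (X.lift β w2) x) (X.pd ((C0+1)+I) f) := by
  intro I
  induction I with
  | zero => intro W β x w2; rfl
  | succ I ih =>
      intro W β x w2
      show X.comp (X.lift (X.lift (stk C0 I β x) x) w2) (X.pd (C0+I+1+1) f)
        = X.comp (X.lift (stk (C0+1) I (X.lift β w2) x) x) (X.pd ((C0+1)+I+1) f)
      erw [swp_arg (M := C0+I),
        pd_arg (n := C0+I+1) (f := f) (Q := X.lift (stk C0 I β x) w2) (t := x),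
        pd_arg (n := (C0+1)+I) (f := f) (Q := stk (C0+1) I (X.lift β w2) x) (t := x)]
      have hLu : Lin (X.lift
          (stk C0 I (X.fst : X.Hom (X.prod (X.pow A C0) (X.prod A A)) _)
            (X.comp X.snd X.fst))
          (X.comp X.snd X.snd)) :=
        lin_lift (lin_stk _ _ lin_fst (lin_comp lin_snd lin_fst)) (lin_comp lin_snd lin_snd)
      have hRu : Lin (stk (C0+1) I
          (X.lift (X.fst : X.Hom (X.prod (X.pow A C0) (X.prod A A)) _) (X.comp X.snd X.snd))
          (X.comp X.snd X.fst)) :=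
        lin_stk _ _ (lin_lift lin_fst (lin_comp lin_snd lin_snd)) (lin_comp lin_snd lin_fst)
      have hIH := ih (X.fst : X.Hom (X.prod (X.pow A C0) (X.prod A A)) _)
        (X.comp X.snd X.fst) (X.comp X.snd X.snd)
      have htr := D_transport hLu hRu hIH
        (X.lift β (X.lift x w2)) (X.lift (X.comp x (X.pad A C0)) X.zero)
      have pu1 : X.comp (X.lift β (X.lift x w2))
          (X.fst : X.Hom (X.prod (X.pow A C0) (X.prod A A)) _) = β := X.lift_fst _ _
      have pu2 : X.comp (X.lift β (X.lift x w2)) (X.comp X.snd X.fst) = x := by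
        rw [← X.assoc, X.lift_snd, X.lift_fst]
      have pu3 : X.comp (X.lift β (X.lift x w2)) (X.comp X.snd X.snd) = w2 := by
        rw [← X.assoc, X.lift_snd, X.lift_snd]
      have pw1 : X.comp (X.lift (X.comp x (X.pad A C0)) (X.zero : X.Hom W (X.prod A A)))
          X.fst = X.comp x (X.pad A C0) := X.lift_fst _ _
      have pw2 : X.comp (X.lift (X.comp x (X.pad A C0)) (X.zero : X.Hom W (X.prod A A)))
          (X.comp X.snd X.fst) = X.zero := by
        rw [← X.assoc, X.lift_snd, zero_fst]
      have pw3 : X.comp (X.lift (X.comp x (X.pad A C0)) (X.zero : X.Hom W (X.prod A A)))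
          (X.comp X.snd X.snd) = X.zero := by
        rw [← X.assoc, X.lift_snd, zero_snd]
      erw [comp_lift, comp_lift, stk_pre, stk_pre, stk_pre, stk_pre, comp_lift, comp_lift,
        pu1, pu2, pu3, pw1, pw2, pw3, stk_pad, ← pad_arg, ← pad_arg, stk_pad] at htr
      exact htr

end MTaux
namespace MTaux

variable {k : Type w} [CommSemiring k] {X : CDC k}

/-! ### Peeling the innermost derivative -/

/-- `Xi m : A^{m+2} → (A×A)^{m+1}`-ish reshaping used to peel the innermost derivative. -/
def Xi {A : X.Obj} : (m : ℕ) → X.Hom (X.pow A (m+1)) (X.pow (X.prod A A) m)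
  | 0 => X.idm (X.prod A A)
  | m+1 => X.lift (X.comp X.fst (Xi m)) (X.lift X.snd X.zero)

theorem lin_Xi {A : X.Obj} (m : ℕ) : Lin (Xi (X := X) (A := A) m) := by
  induction m with
  | zero => exact lin_idm
  | succ m ih => exact lin_lift (lin_comp lin_fst ih) (lin_lift lin_snd lin_zero)

theorem pad_Xi {A : X.Obj} (m : ℕ) :
    X.comp (X.pad A (m+1)) (Xi m)
      = X.comp (X.lift (X.idm A) X.zero) (X.pad (X.prod A A) m) := by
  induction m with
  | zero =>
      show X.comp (X.lift (X.idm A) X.zero) (X.idm _)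
        = X.comp (X.lift (X.idm A) X.zero) (X.idm _)
      rfl
  | succ m ih =>
      show X.comp (X.lift (X.pad A (m+1)) X.zero)
          (X.lift (X.comp X.fst (Xi m)) (X.lift X.snd X.zero))
        = X.comp (X.lift (X.idm A) X.zero) (X.pad (X.prod A A) (m+1))
      erw [comp_lift, ← X.assoc, X.lift_fst, ih, comp_lift, X.lift_snd, X.comp_zero, lift_zero,
        pad_succ, comp_lift, X.comp_zero]

/-- Peeling: `pd (m+1) h = Xi m ; pd m (D h)`. -/
theorem xiPeel {A B : X.Obj} (m : ℕ) (h : X.Hom A B) :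
    X.pd (m+1) h = X.comp (Xi m) (X.pd m (X.D h)) := by
  induction m with
  | zero => rw [pd_one]; exact (X.id_comp _).symm
  | succ m ih =>
      rw [pd_succ (n := m+1), ih, chain_lin (lin_Xi m), ← X.assoc]
      have Xi_succ : Xi (X := X) (A := A) (m+1)
          = X.lift (X.comp X.fst (Xi m)) (X.lift X.snd X.zero) := rfl
      have e : X.comp (X.lift X.fst (X.comp X.snd (X.pad A (m+1))))
          (X.lift (X.comp X.fst (Xi m)) (X.comp X.snd (Xi m)))
          = X.comp (Xi (m+1)) (X.lift X.fst (X.comp X.snd (X.pad (X.prod A A) m))) := by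
        erw [comp_lift, ← X.assoc, X.lift_fst, ← X.assoc, X.lift_snd, X.assoc, pad_Xi,
          ← X.assoc, comp_lift, X.comp_id, X.comp_zero,
          comp_lift, Xi_succ, X.lift_fst, ← X.assoc, X.lift_snd]; rfl
      erw [e, X.assoc, ← pd_succ]; rfl

/-! ### Mixed diagonals -/

/-- `mdiag p v m : A → C^{m}` is the tuple `(p, v, v, …, v)`. -/
def mdiag {A C : X.Obj} (p v : X.Hom A C) : (m : ℕ) → X.Hom A (X.pow C m)
  | 0 => p
  | m+1 => X.lift (mdiag p v m) v

theorem mdiag_Xi {A C : X.Obj} (p v : X.Hom A C) (m : ℕ) :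
    X.comp (mdiag p v (m+1)) (Xi m)
      = mdiag (X.lift p v) (X.lift v X.zero) m := by
  induction m with
  | zero => exact X.comp_id _
  | succ m ih =>
      show X.comp (X.lift (mdiag p v (m+1)) v)
          (X.lift (X.comp X.fst (Xi m)) (X.lift X.snd X.zero))
        = X.lift (mdiag (X.lift p v) (X.lift v X.zero) m) (X.lift v X.zero)
      rw [comp_lift, ← X.assoc, X.lift_fst, ih, comp_lift, X.lift_snd, X.comp_zero]

theorem mdiag_map {A C C' : X.Obj} (p v : X.Hom A C) (φ : X.Hom C C') (m : ℕ) :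
    X.comp (mdiag p v m) (powMap φ m) = mdiag (X.comp p φ) (X.comp v φ) m := by
  induction m with
  | zero => rfl
  | succ m ih =>
      show X.comp (X.lift (mdiag p v m) v)
          (X.lift (X.comp X.fst (powMap φ m)) (X.comp X.snd φ))
        = X.lift (mdiag (X.comp p φ) (X.comp v φ) m) (X.comp v φ)
      rw [comp_lift, ← X.assoc, X.lift_fst, ih, ← X.assoc, X.lift_snd]

theorem mdiag_diag {A : X.Obj} (m : ℕ) :
    mdiag (X.zero : X.Hom A A) (X.idm A) m = X.diag A m := by
  induction m with
  | zero => rfl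
  | succ m ih => show X.lift (mdiag X.zero (X.idm A) m) (X.idm A) = _; rw [ih]; rfl

end MTaux
namespace MTaux

variable {k : Type w} [CommSemiring k] {X : CDC k}

/-! ### The main computation -/

/-- `x ↦ (0, x)`. -/
def dl {A : X.Obj} : X.Hom A (X.prod A A) := X.lift X.zero (X.idm A)
/-- `x ↦ (x, 0)`. -/
def el {A : X.Obj} : X.Hom A (X.prod A A) := X.lift (X.idm A) X.zero
/-- `((x,v),(a,b)) ↦ ((x,v),(a,0))`. -/
def kap {A : X.Obj} : X.Hom (X.prod (X.prod A A) (X.prod A A)) (X.prod (X.prod A A) (X.prod A A)) :=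
  X.lift X.fst (X.lift (X.comp X.snd X.fst) X.zero)
/-- `(x,v) ↦ ((x,v),(v,0))`. -/
def mu {A : X.Obj} : X.Hom (X.prod A A) (X.prod (X.prod A A) (X.prod A A)) :=
  X.lift (X.idm (X.prod A A)) (X.lift X.snd X.zero)

theorem lin_kap {A : X.Obj} : Lin (kap (X := X) (A := A)) :=
  lin_lift lin_fst (lin_lift (lin_comp lin_snd lin_fst) lin_zero)

theorem lin_mu {A : X.Obj} : Lin (mu (X := X) (A := A)) :=
  lin_lift lin_idm (lin_lift lin_snd lin_zero)

theorem main {A B : X.Obj} (f : X.Hom A B) :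
    ∀ (m I C0 : ℕ),
    X.comp (mdiag (dl (X := X) (A := A)) el m)
        (X.pd m (X.comp (stk C0 I (X.comp X.snd (X.diag A C0)) X.fst) (X.pd (C0+I) f)))
      = if I = m
        then X.smul ((Nat.factorial I : ℕ) : k) (X.comp (X.diag A (C0+I)) (X.pd (C0+I) f))
        else X.zero := by
  intro m
  induction m with
  | zero =>
      intro I C0
      cases I with
      | zero =>
          rw [if_pos rfl]
          show X.comp dl (X.comp (X.comp X.snd (X.diag A C0)) (X.pd (C0+0) f)) = _
          rw [← X.assoc, ← X.assoc, show X.comp (dl (X := X) (A := A)) X.snd = X.idm A from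
            X.lift_snd _ _, X.id_comp,
            show ((Nat.factorial 0 : ℕ) : k) = 1 by norm_num, X.one_smul]
          rfl
      | succ I' =>
          rw [if_neg (by omega)]
          show X.comp dl (X.comp (X.lift (stk C0 I' (X.comp X.snd (X.diag A C0)) X.fst) X.fst)
            (X.pd (C0+I'+1) f)) = X.zero
          erw [← X.assoc, comp_lift, show X.comp (dl (X := X) (A := A)) X.fst = X.zero from
            X.lift_fst _ _, pd_arg, lin_zero_comp (lin_pad _), Dlast_zero]
  | succ m ih =>
      intro I C0
      rw [xiPeel, ← X.assoc, mdiag_Xi]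
      -- identify the pattern maps
      have hdl : X.comp (X.lift (dl (X := X) (A := A)) el) kap = X.lift dl el := by
        rw [kap, comp_lift, X.lift_fst, comp_lift, ← X.assoc, X.lift_snd, X.comp_zero]
        rw [show X.comp (el (X := X) (A := A)) X.fst = X.idm A from X.lift_fst _ _]
        rfl
      have hel : X.comp (X.lift (el (X := X) (A := A)) X.zero) kap = X.lift el X.zero := by
        rw [kap, comp_lift, X.lift_fst, comp_lift, ← X.assoc, X.lift_snd, X.comp_zero,
          zero_fst, lift_zero]
      have hdmu : X.comp (dl (X := X) (A := A)) mu = X.lift dl el := by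
        rw [mu, comp_lift, X.comp_id, comp_lift, X.comp_zero,
          show X.comp (dl (X := X) (A := A)) X.snd = X.idm A from X.lift_snd _ _]
        rfl
      have hemu : X.comp (el (X := X) (A := A)) mu = X.lift el X.zero := by
        rw [mu, comp_lift, X.comp_id, comp_lift, X.comp_zero,
          show X.comp (el (X := X) (A := A)) X.snd = X.zero from X.lift_snd _ _, lift_zero]
      -- insert κ
      rw [show mdiag (X.lift (dl (X := X) (A := A)) el) (X.lift el X.zero) m
            = X.comp (mdiag (X.lift dl el) (X.lift el X.zero) m) (powMap kap m) by
          rw [mdiag_map, hdl, hel],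
        X.assoc, ← pd_lin lin_kap]
      -- compute κ ; D (…)
      have hyt : Lin (stk C0 I (X.comp X.snd (X.diag A C0)) (X.fst : X.Hom (X.prod A A) A)) :=
        lin_stk _ _ (lin_comp lin_snd (lin_diag C0)) lin_fst
      have hkd : X.comp kap (X.D (X.comp (stk C0 I (X.comp X.snd (X.diag A C0)) X.fst)
            (X.pd (C0+I) f)))
          = X.comp (X.lift
              (stk C0 I (X.comp X.fst (X.comp X.snd (X.diag A C0))) (X.comp X.fst X.fst))
              (stk C0 I X.zero (X.comp X.snd X.fst)))
            (X.D (X.pd (C0+I) f)) := by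
        rw [chain_lin hyt, ← X.assoc, comp_lift, kap]
        rw [← X.assoc, X.lift_fst, ← X.assoc, X.lift_snd, stk_pre, stk_pre,
          show X.comp (X.lift (X.comp (X.snd : X.Hom (X.prod (X.prod A A) (X.prod A A)) _)
            X.fst) X.zero) (X.comp X.snd (X.diag A C0)) = X.zero by
          rw [← X.assoc, X.lift_snd, lin_zero_comp (lin_diag C0)],
          show X.comp (X.lift (X.comp (X.snd : X.Hom (X.prod (X.prod A A) (X.prod A A)) _)
            X.fst) X.zero) X.fst = X.comp X.snd X.fst from X.lift_fst _ _]
      rw [hkd, aPart]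
      -- now split on I
      cases I with
      | zero =>
          rw [if_neg (by omega), show aRHS (X := X) C0 f 0
              (X.comp X.fst (X.comp X.snd (X.diag A C0))) (X.comp X.fst X.fst)
              (X.comp X.snd X.fst) = X.zero from rfl,
            pd_zero, X.comp_zero]
      | succ I' =>
          rw [aRHS_succ, pd_smul, X.comp_smul]
          -- switch to μ and push the new slot down
          rw [show mdiag (X.lift (dl (X := X) (A := A)) el) (X.lift el X.zero) m
                = X.comp (mdiag dl el m) (powMap mu m) by
              rw [mdiag_map, hdmu, hemu],
            X.assoc, ← pd_lin lin_mu]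
          have hmu1 : X.comp (mu (X := X) (A := A))
              (X.comp (X.lift (stk C0 I' (X.comp X.fst (X.comp X.snd (X.diag A C0)))
                (X.comp X.fst X.fst)) (X.comp X.snd X.fst)) (X.pd (C0+I'+1) f))
              = X.comp (X.lift (stk C0 I' (X.comp X.snd (X.diag A C0)) X.fst) X.snd)
                (X.pd (C0+I'+1) f) := by
            erw [← X.assoc, comp_lift, stk_pre]
            rw [show X.comp (mu (X := X) (A := A)) (X.comp X.fst (X.comp X.snd (X.diag A C0)))
                = X.comp X.snd (X.diag A C0) by
              rw [← X.assoc, mu, X.lift_fst, X.id_comp],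
              show X.comp (mu (X := X) (A := A)) (X.comp X.fst X.fst) = X.fst by
                rw [← X.assoc, mu, X.lift_fst, X.id_comp],
              show X.comp (mu (X := X) (A := A)) (X.comp X.snd X.fst) = X.snd by
                rw [← X.assoc, mu, X.lift_snd, X.lift_fst]]
          rw [hmu1, moveTop]
          rw [show X.lift (X.comp (X.snd : X.Hom (X.prod A A) A) (X.diag A C0)) X.snd
              = X.comp X.snd (X.diag A (C0+1)) by
            erw [show X.diag A (C0+1) = X.lift (X.diag A C0) (X.idm A) from rfl, comp_lift,
              X.comp_id]]
          rw [ih I' (C0+1)]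
          by_cases hIm : I' = m
          · rw [if_pos hIm, if_pos (by omega : I'+1 = m+1), ← X.mul_smul]
            have hidx : C0+1+I' = C0+(I'+1) := by omega
            rw [hidx]
            congr 1
            push_cast [Nat.factorial_succ]
            ring
          · rw [if_neg hIm, if_neg (by omega : ¬ I'+1 = m+1), X.smul_zero]

end MTaux
namespace MTaux

variable {k : Type w} [CommSemiring k] {X : CDC k}

theorem mdiag_pre {W W' A : X.Obj} (u : X.Hom W' W) (p v : X.Hom W A) (m : ℕ) :
    X.comp u (mdiag p v m) = mdiag (X.comp u p) (X.comp u v) m := by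
  induction m with
  | zero => rfl
  | succ m ih =>
      show X.comp u (X.lift (mdiag p v m) v) = X.lift (mdiag (X.comp u p) (X.comp u v) m) _
      rw [comp_lift, ih]

theorem mdiag_pad {W A : X.Obj} (t : X.Hom W A) (m : ℕ) :
    mdiag t (X.zero : X.Hom W A) m = X.comp t (X.pad A m) := by
  induction m with
  | zero => show t = X.comp t (X.idm A); rw [X.comp_id]
  | succ m ih =>
      show X.lift (mdiag t X.zero m) X.zero = _
      rw [ih, pad_arg]

theorem lin_mdiag {A C : X.Obj} {p v : X.Hom A C} (hp : Lin p) (hv : Lin v) (m : ℕ) :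
    Lin (mdiag p v m) := by
  induction m with
  | zero => exact hp
  | succ m ih => exact lin_lift ih hv

/-- Bridge between `stk 0 i` tuples (index `0 + i`) and `mdiag` tuples (index `i`). -/
theorem bridge {A B : X.Obj} (f : X.Hom A B) :
    ∀ (i : ℕ) {W : X.Obj} (t x : X.Hom W A),
    X.comp (stk 0 i (X.comp t (X.pad A 0)) x) (X.pd (0+i) f)
      = X.comp (mdiag t x i) (X.pd i f) := by
  intro i
  induction i with
  | zero =>
      intro W t x
      show X.comp (X.comp t (X.idm A)) f = X.comp t f
      rw [X.comp_id]
  | succ i ih =>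
      intro W t x
      show X.comp (X.lift (stk 0 i (X.comp t (X.pad A 0)) x) x) (X.pd (0+i+1) f)
        = X.comp (X.lift (mdiag t x i) x) (X.pd (i+1) f)
      rw [pd_arg, pd_arg]
      have hLu : Lin (stk 0 i (X.comp (X.fst : X.Hom (X.prod A A) A) (X.pad A 0))
          (X.snd : X.Hom (X.prod A A) A)) :=
        lin_stk _ _ (lin_comp lin_fst (lin_pad 0)) lin_snd
      have hRu : Lin (mdiag (X.fst : X.Hom (X.prod A A) A) X.snd i) :=
        lin_mdiag lin_fst lin_snd i
      have hIH := ih (X.fst : X.Hom (X.prod A A) A) X.snd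
      have htr := D_transport hLu hRu hIH (X.lift t x) (X.lift x X.zero)
      have e1 : X.comp (X.lift t x) (stk 0 i (X.comp X.fst (X.pad A 0)) X.snd)
          = stk 0 i (X.comp t (X.pad A 0)) x := by
        rw [stk_pre, ← X.assoc, X.lift_fst, X.lift_snd]
      have e2 : X.comp (X.lift x (X.zero : X.Hom W A)) (stk 0 i (X.comp X.fst (X.pad A 0)) X.snd)
          = X.comp x (X.pad A (0+i)) := by
        rw [stk_pre, ← X.assoc, X.lift_fst, X.lift_snd, stk_pad]
      have e3 : X.comp (X.lift t x) (mdiag (X.fst : X.Hom (X.prod A A) A) X.snd i)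
          = mdiag t x i := by
        rw [mdiag_pre, X.lift_fst, X.lift_snd]
      have e4 : X.comp (X.lift x (X.zero : X.Hom W A)) (mdiag (X.fst : X.Hom (X.prod A A) A) X.snd i)
          = X.comp x (X.pad A i) := by
        rw [mdiag_pre, X.lift_fst, X.lift_snd, mdiag_pad]
      rw [e1, e2, e3, e4] at htr
      exact htr

/-- Orthogonality of raw Taylor monomial kernels. -/
theorem diag_pd_diag {A B : X.Obj} (f : X.Hom A B) (i j : ℕ) :
    X.comp (X.diag A j) (X.pd j (X.comp (X.diag A i) (X.pd i f)))
      = if i = j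
        then X.smul ((Nat.factorial i : ℕ) : k) (X.comp (X.diag A i) (X.pd i f))
        else X.zero := by
  have hb : X.comp (stk 0 i (X.comp X.snd (X.diag A 0)) (X.fst : X.Hom (X.prod A A) A))
      (X.pd (0+i) f)
      = X.comp X.fst (X.comp (X.diag A i) (X.pd i f)) := by
    have h0 : X.comp (X.snd : X.Hom (X.prod A A) A) (X.diag A 0)
        = X.comp (X.zero : X.Hom (X.prod A A) A) (X.pad A 0) := by
      erw [show X.diag A 0 = (X.zero : X.Hom A A) from rfl, X.comp_zero,
        lin_zero_comp (lin_pad 0)]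
    rw [h0, bridge, show mdiag (X.zero : X.Hom (X.prod A A) A) X.fst i
        = X.comp X.fst (X.diag A i) by
      rw [← mdiag_diag, mdiag_pre, X.comp_zero, X.comp_id], X.assoc]
  have h := main f j i 0
  rw [hb, pd_lin lin_fst, ← X.assoc, mdiag_map, show X.comp (dl (X := X) (A := A)) X.fst
      = X.zero from X.lift_fst _ _, show X.comp (el (X := X) (A := A)) X.fst
      = X.idm A from X.lift_fst _ _, mdiag_diag, Nat.zero_add] at h
  exact h

end MTaux
namespace MTaux

variable {k : Type w} [CommSemiring k]

/-- Orthogonality / idempotence of the Taylor monomial operators. -/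
theorem M_M (Xq : QCDC k) {A B : Xq.Obj} (f : Xq.Hom A B) (i j : ℕ) :
    Xq.M j (Xq.M i f) = if i = j then Xq.M i f else Xq.zero := by
  show Xq.toCDC.smul (Xq.invFact j)
      (Xq.toCDC.comp (Xq.toCDC.diag A j) (Xq.toCDC.pd j
        (Xq.toCDC.smul (Xq.invFact i)
          (Xq.toCDC.comp (Xq.toCDC.diag A i) (Xq.toCDC.pd i f))))) = _
  rw [pd_smul, Xq.toCDC.comp_smul, diag_pd_diag]
  by_cases h : i = j
  · subst h
    rw [if_pos rfl, if_pos rfl]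
    show Xq.toCDC.smul (Xq.invFact i) (Xq.toCDC.smul (Xq.invFact i)
        (Xq.toCDC.smul ((Nat.factorial i : ℕ) : k)
          (Xq.toCDC.comp (Xq.toCDC.diag A i) (Xq.toCDC.pd i f)))) = _
    rw [← Xq.toCDC.mul_smul, ← Xq.toCDC.mul_smul]
    have h2 : Xq.invFact i * Xq.invFact i * ((Nat.factorial i : ℕ) : k) = Xq.invFact i := by
      rw [mul_assoc, mul_comm (Xq.invFact i) (((Nat.factorial i : ℕ) : k)), Xq.invFact_spec,
        mul_one]
    rw [h2]
    rfl
  · rw [if_neg h, if_neg h, Xq.toCDC.smul_zero, Xq.toCDC.smul_zero]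

theorem M_add (Xq : QCDC k) {A B : Xq.Obj} (u v : Xq.Hom A B) (j : ℕ) :
    Xq.M j (Xq.add u v) = Xq.add (Xq.M j u) (Xq.M j v) := by
  show Xq.toCDC.smul (Xq.invFact j)
      (Xq.toCDC.comp (Xq.toCDC.diag A j) (Xq.toCDC.pd j (Xq.toCDC.add u v))) = _
  rw [pd_add, Xq.toCDC.comp_add, Xq.toCDC.smul_add]
  rfl

end MTaux

/-- `M⁽ʲ⁾[T⁽ⁿ⁾[f]] = M⁽ʲ⁾[f]` for `j ≤ n`, and `M⁽ʲ⁾[T⁽ⁿ⁾[f]] = 0`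
for `n < j`. -/
theorem M_T {k : Type w} [CommSemiring k] (X : QCDC k)
    {A B : X.Obj} (f : X.Hom A B) (n j : ℕ) :
    (j ≤ n → X.M j (X.T n f) = X.M j f) ∧ (n < j → X.M j (X.T n f) = X.zero) := by
  induction n with
  | zero =>
      constructor
      · intro hj
        have hj0 : j = 0 := Nat.le_zero.mp hj
        subst hj0
        show X.M 0 (X.M 0 f) = X.M 0 f
        rw [MTaux.M_M X f 0 0, if_pos rfl]
      · intro hj
        show X.M j (X.M 0 f) = X.zero
        rw [MTaux.M_M X f 0 j, if_neg (by omega)]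
  | succ n ih =>
      constructor
      · intro hj
        show X.M j (X.add (X.T n f) (X.M (n+1) f)) = X.M j f
        rw [MTaux.M_add, MTaux.M_M X f (n+1) j]
        by_cases hjn : j ≤ n
        · rw [ih.1 hjn, if_neg (by omega), MTaux.add_zero']
        · have hj1 : j = n + 1 := by omega
          subst hj1
          rw [ih.2 (by omega), if_pos rfl, X.zero_add]
      · intro hj
        show X.M j (X.add (X.T n f) (X.M (n+1) f)) = X.zero
        rw [MTaux.M_add, MTaux.M_M X f (n+1) j, ih.2 (by omega), if_neg (by omega), X.zero_add]
end
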